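/- arXiv:1807.11029 — 12 statements merged into one kernel-verified Lean document; each statement's English description precedes it below -/
import Mathlib

section
/- Let n ≥ 1, let f : ℝⁿ → ℝⁿ, and suppose there is a continuous matrix-valued function A : ℝⁿ → (n×n real matrices) such that f(x) = A(x)·x for all x ∈ ℝⁿ. Suppose moreover there exists a single (state-independent) invertible complex n×n matrix V such that for every x ∈ ℝⁿ the matrix V⁻¹·A(x)·V (with A(x) viewed as a complex matrix) is diagonal and every diagonal entry of it has strictly negative real part. Then every solution x : [0,∞) → ℝⁿ of the differential equation x'(t) = f(x(t)) converges to the origin as t → ∞. -/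
/-!
In the coordinates `y = V⁻¹ x` the system decouples into `yᵢ' = λᵢ(x) yᵢ` with `Re λᵢ < 0`.
If `Re λᵢ ≤ c` along the trajectory, then `‖yᵢ‖² e^{-2ct}` is nonincreasing, so
`‖yᵢ(t)‖ ≤ ‖yᵢ(0)‖ e^{ct}`. With `c = 0` this confines the trajectory to a compact set; there the
continuous functions `Re λᵢ` are bounded by some `c < 0`, which gives exponential decay.
-/

open Filter Topology Matrix

theorem norm_le_mul_exp_of_hasDerivAt_mul {u a : ℝ → ℂ} {c : ℝ}
    (hu : ∀ t, 0 ≤ t → HasDerivAt u (a t * u t) t) (ha : ∀ t, 0 ≤ t → (a t).re ≤ c)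
    {t : ℝ} (ht : 0 ≤ t) : ‖u t‖ ≤ ‖u 0‖ * Real.exp (c * t) := by
  set φ : ℝ → ℝ := fun s => ‖u s‖ ^ 2 * Real.exp (-(2 * c) * s) with hφ_def
  have hφ : ∀ s, 0 ≤ s → HasDerivAt φ (2 * ((a s).re - c) * φ s) s := by
    intro s hs
    refine ((hu s hs).norm_sq.mul ((hasDerivAt_id s).const_mul (-(2 * c))).exp).congr_deriv ?_
    rw [Complex.inner, mul_assoc (a s), Complex.mul_conj, ← Complex.sq_norm, Complex.re_mul_ofReal]
    simp only [hφ_def, id]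
    ring
  have hφ_anti : AntitoneOn φ (Set.Ici 0) :=
    antitoneOn_of_hasDerivWithinAt_nonpos (convex_Ici 0)
      (fun s hs => (hφ s hs).continuousAt.continuousWithinAt)
      (fun s hs => (hφ s (interior_subset hs)).hasDerivWithinAt)
      (fun s hs => mul_nonpos_of_nonpos_of_nonneg
        (by linarith [ha s (interior_subset hs)]) (by positivity))
  have hφt : ‖u t‖ ^ 2 * Real.exp (-(2 * c) * t) ≤ ‖u 0‖ ^ 2 := by
    simpa [hφ_def] using hφ_anti Set.self_mem_Ici ht ht
  have hexp : Real.exp (-(2 * c) * t) * Real.exp (c * t) ^ 2 = 1 := by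
    rw [← Real.exp_nat_mul, ← Real.exp_add, Real.exp_eq_one_iff]
    push_cast; ring
  have hsq : ‖u t‖ ^ 2 ≤ (‖u 0‖ * Real.exp (c * t)) ^ 2 :=
    calc ‖u t‖ ^ 2 = ‖u t‖ ^ 2 * Real.exp (-(2 * c) * t) * Real.exp (c * t) ^ 2 := by
          rw [mul_assoc, hexp, mul_one]
      _ ≤ ‖u 0‖ ^ 2 * Real.exp (c * t) ^ 2 := by gcongr
      _ = (‖u 0‖ * Real.exp (c * t)) ^ 2 := (mul_pow _ _ _).symm
  exact (pow_le_pow_iff_left₀ (norm_nonneg _) (by positivity) two_ne_zero).mp hsq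

theorem tendsto_zero_of_hasDerivAt_mul {u a : ℝ → ℂ} {c : ℝ} (hc : c < 0)
    (hu : ∀ t, 0 ≤ t → HasDerivAt u (a t * u t) t) (ha : ∀ t, 0 ≤ t → (a t).re ≤ c) :
    Tendsto u atTop (𝓝 0) := by
  refine squeeze_zero_norm' (eventually_atTop.mpr ⟨0, fun t ht =>
    norm_le_mul_exp_of_hasDerivAt_mul hu ha ht⟩) ?_
  simpa using (Real.tendsto_exp_atBot.comp (tendsto_id.const_mul_atTop_of_neg hc)).const_mul ‖u 0‖

section EigenCoords

variable {ι : Type*} [Fintype ι] (V : Matrix ι ι ℂ)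

noncomputable def ofEigenCoords : (ι → ℂ) →L[ℝ] (ι → ℝ) :=
  (ContinuousLinearMap.pi fun j => Complex.reCLM.comp (ContinuousLinearMap.proj j)).comp
    ((Matrix.mulVecLin V).restrictScalars ℝ).toContinuousLinearMap

theorem ofEigenCoords_apply (w : ι → ℂ) (j : ι) : ofEigenCoords V w j = ((V *ᵥ w) j).re := rfl

variable [DecidableEq ι]

noncomputable def eigenCoords : (ι → ℝ) →L[ℝ] (ι → ℂ) :=
  ((Matrix.mulVecLin V⁻¹).restrictScalars ℝ).toContinuousLinearMap.comp
    (ContinuousLinearMap.pi fun j => Complex.ofRealCLM.comp (ContinuousLinearMap.proj j))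

theorem eigenCoords_apply (v : ι → ℝ) : eigenCoords V v = V⁻¹ *ᵥ fun j => (v j : ℂ) := rfl

variable {V}

theorem ofEigenCoords_eigenCoords (hV : IsUnit V.det) (v : ι → ℝ) :
    ofEigenCoords V (eigenCoords V v) = v := by
  ext j
  simp [ofEigenCoords_apply, eigenCoords_apply, mulVec_mulVec, mul_nonsing_inv V hV]

theorem eigenCoords_mulVec (hV : IsUnit V.det) (B : Matrix ι ι ℝ) (v : ι → ℝ) :
    eigenCoords V (B *ᵥ v) = (V⁻¹ * B.map Complex.ofReal * V) *ᵥ eigenCoords V v := by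
  have hB : (fun j => ((B *ᵥ v) j : ℂ)) = B.map Complex.ofReal *ᵥ fun j => (v j : ℂ) :=
    funext (RingHom.map_mulVec Complex.ofRealHom B v)
  rw [eigenCoords_apply, eigenCoords_apply, hB, mulVec_mulVec, mulVec_mulVec,
    mul_nonsing_inv_cancel_right _ _ hV]

theorem hasDerivAt_eigenCoords_apply (hV : IsUnit V.det) {B : Matrix ι ι ℝ}
    (hB : (V⁻¹ * B.map Complex.ofReal * V).IsDiag) {x : ℝ → ι → ℝ} {t : ℝ}
    (hx : HasDerivAt x (B *ᵥ x t) t) (i : ι) :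
    HasDerivAt (fun s => eigenCoords V (x s) i)
      ((V⁻¹ * B.map Complex.ofReal * V) i i * eigenCoords V (x t) i) t := by
  have h := hasDerivAt_pi.mp ((eigenCoords V).hasFDerivAt.comp_hasDerivAt t hx) i
  rwa [eigenCoords_mulVec hV, ← hB.diagonal_diag, mulVec_diagonal] at h

end EigenCoords

theorem stmt_0_general (n : ℕ)
    (f : (Fin n → ℝ) → (Fin n → ℝ))
    (A : (Fin n → ℝ) → Matrix (Fin n) (Fin n) ℝ)
    (hAcont : Continuous A)
    (hPL : ∀ x : Fin n → ℝ, f x = (A x).mulVec x)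
    (V : Matrix (Fin n) (Fin n) ℂ) (hV : IsUnit V)
    (hdiag : ∀ x : Fin n → ℝ, (V⁻¹ * (A x).map Complex.ofReal * V).IsDiag)
    (hneg : ∀ x : Fin n → ℝ, ∀ i : Fin n,
      ((V⁻¹ * (A x).map Complex.ofReal * V) i i).re < 0)
    (x : ℝ → (Fin n → ℝ))
    (hx : ∀ t : ℝ, 0 ≤ t → HasDerivAt x (f (x t)) t) :
    Filter.Tendsto x Filter.atTop (nhds 0) := by
  replace hV : IsUnit V.det := (isUnit_iff_isUnit_det V).mp hV
  set D := fun p => V⁻¹ * (A p).map Complex.ofReal * V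
  set y := fun t => eigenCoords V (x t)
  have hy : ∀ i t, 0 ≤ t → HasDerivAt (fun s => y s i) (D (x t) i i * y t i) t :=
    fun i t ht => hasDerivAt_eigenCoords_apply hV (hdiag _) (hPL (x t) ▸ hx t ht) i
  set K := ofEigenCoords V '' Metric.closedBall 0 ‖y 0‖
  have hK : IsCompact K := (isCompact_closedBall _ _).image (ofEigenCoords V).continuous
  have hxK : ∀ t, 0 ≤ t → x t ∈ K := fun t ht => by
    refine ⟨y t, mem_closedBall_zero_iff.mpr ((pi_norm_le_iff_of_nonneg (norm_nonneg _)).mpr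
      fun i => ?_), ofEigenCoords_eigenCoords hV _⟩
    have := norm_le_mul_exp_of_hasDerivAt_mul (hy i) (fun s _ => (hneg (x s) i).le) ht
    rw [zero_mul, Real.exp_zero, mul_one] at this
    exact this.trans (norm_le_pi_norm (y 0) i)
  have hy_tendsto : ∀ i, Tendsto (fun t => y t i) atTop (𝓝 0) := by
    intro i
    have hDcont : Continuous fun p => -(D p i i).re := by fun_prop
    obtain ⟨δ, hδ, hδK⟩ :=
      hK.exists_forall_le' hDcont.continuousOn fun p _ => neg_pos.mpr (hneg p i)
    exact tendsto_zero_of_hasDerivAt_mul (neg_neg_of_pos hδ) (hy i)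
      fun t ht => le_neg_of_le_neg (hδK _ (hxK t ht))
  have hlim := ((ofEigenCoords V).continuous.tendsto 0).comp (tendsto_pi_nhds.mpr hy_tendsto)
  simp only [Function.comp_def, y, ofEigenCoords_eigenCoords hV] at hlim
  rwa [map_zero] at hlim

/-- If a nonlinear system `x' = f(x)` has a pseudo-linear form
`f(x) = A(x)·x` with a continuous matrix-valued `A`, and a single
state-independent invertible complex matrix `V` diagonalizes `A(x)` for every
`x`, with all diagonal entries having strictly negative real part, then every
solution on `[0,∞)` converges to the origin. -/
theorem stmt_0 (n : ℕ) (hn : 1 ≤ n)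
    (f : (Fin n → ℝ) → (Fin n → ℝ))
    (A : (Fin n → ℝ) → Matrix (Fin n) (Fin n) ℝ)
    (hAcont : Continuous A)
    (hPL : ∀ x : Fin n → ℝ, f x = (A x).mulVec x)
    (V : Matrix (Fin n) (Fin n) ℂ) (hV : IsUnit V)
    (hdiag : ∀ x : Fin n → ℝ, (V⁻¹ * (A x).map Complex.ofReal * V).IsDiag)
    (hneg : ∀ x : Fin n → ℝ, ∀ i : Fin n,
      ((V⁻¹ * (A x).map Complex.ofReal * V) i i).re < 0)
    (x : ℝ → (Fin n → ℝ))
    (hx : ∀ t : ℝ, 0 ≤ t → HasDerivAt x (f (x t)) t) :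
    Filter.Tendsto x Filter.atTop (nhds 0) :=
  stmt_0_general n f A hAcont hPL V hV hdiag hneg x hx
end

section
/- Let a, b, c, h, r > 0 and let x₃₀ > h. Set d = min{a, b}. Then there exists ρ₁ > max{r/√d, 0} such that for all (x₁, x₂, x₃) ∈ ℝ³ with h ≤ x₃ ≤ x₃₀ and x₁² + x₂² ≥ ρ₁², one has (r² − ax₁² − bx₂² − cx₃²)·x₃ + (x₃² − h²)·√(x₁² + x₂²) < 0. (Equivalently, at such points the vector field satisfies ẋ₃ < −ρ̇, i.e., the ratio ẋ₃/ρ̇ is below −1 wherever ρ̇ > 0.) -/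
/-!
Write `t = √(x₁² + x₂²)` and `d = min a b`. Since `a x₁² + b x₂² ≥ d t²`, `c x₃² ≥ 0`,
`h ≤ x₃` and `x₃² - h² ≤ x₃₀²`, the left-hand side is at most `(r² - d t²) h + x₃₀² t` once
`r² ≤ d t²`. This is a quadratic in `t` with leading coefficient `-d h < 0`, so it is negative
for `t ≥ ρ₁ := 1 + (r² h + x₃₀²) / (d h)`.
-/

lemma add_mul_lt_mul_sq {A B C ρ t : ℝ} (hA : 0 ≤ A) (hC : 0 ≤ C) (hρ : 1 ≤ ρ) (hρt : ρ ≤ t)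
    (h : A + B < C * ρ) : A + B * t < C * t ^ 2 := by
  have ht : 0 < t := by linarith
  calc A + B * t ≤ (A + B) * t := by nlinarith
    _ < C * ρ * t := mul_lt_mul_of_pos_right h ht
    _ ≤ C * t ^ 2 := by nlinarith [mul_le_mul_of_nonneg_left hρt hC]

lemma div_sqrt_lt_of_sq_lt_mul_sq {r d ρ : ℝ} (hd : 0 < d) (hρ : 0 ≤ ρ) (h : r ^ 2 < d * ρ ^ 2) :
    r / √d < ρ := by
  rw [div_lt_iff₀ (Real.sqrt_pos.2 hd)]
  have hsq : r ^ 2 < (ρ * √d) ^ 2 := by rwa [mul_pow, Real.sq_sqrt hd.le, mul_comm]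
  exact (le_abs_self r).trans_lt (abs_lt_of_sq_lt_sq hsq (by positivity))

lemma field_add_radial_neg {a b c d h r x₃₀ ρ x₁ x₂ x₃ : ℝ} (hda : d ≤ a) (hdb : d ≤ b)
    (hd : 0 ≤ d) (hc : 0 ≤ c) (hh : 0 < h) (hρ : 1 ≤ ρ) (hρ' : r ^ 2 * h + x₃₀ ^ 2 < d * h * ρ)
    (hx₃ : h ≤ x₃) (hx₃' : x₃ ≤ x₃₀) (hS : ρ ^ 2 ≤ x₁ ^ 2 + x₂ ^ 2) :
    (r ^ 2 - a * x₁ ^ 2 - b * x₂ ^ 2 - c * x₃ ^ 2) * x₃ +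
      (x₃ ^ 2 - h ^ 2) * √(x₁ ^ 2 + x₂ ^ 2) < 0 := by
  set t := √(x₁ ^ 2 + x₂ ^ 2)
  have ht2 : t ^ 2 = x₁ ^ 2 + x₂ ^ 2 := Real.sq_sqrt (by positivity)
  have hρt : ρ ≤ t := Real.le_sqrt_of_sq_le hS
  have ht : 0 ≤ t := by linarith
  have hx₃0 : 0 < x₃ := hh.trans_le hx₃
  have hquad : r ^ 2 * h + x₃₀ ^ 2 * t < d * h * t ^ 2 :=
    add_mul_lt_mul_sq (by positivity) (by positivity) hρ hρt hρ'
  have hdt : r ^ 2 - d * t ^ 2 ≤ 0 := by nlinarith [mul_nonneg (sq_nonneg x₃₀) ht]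
  have hcoef : r ^ 2 - a * x₁ ^ 2 - b * x₂ ^ 2 - c * x₃ ^ 2 ≤ r ^ 2 - d * t ^ 2 := by
    nlinarith [sq_nonneg x₁, sq_nonneg x₂, sq_nonneg x₃]
  have hrad : x₃ ^ 2 - h ^ 2 ≤ x₃₀ ^ 2 := by nlinarith
  calc (r ^ 2 - a * x₁ ^ 2 - b * x₂ ^ 2 - c * x₃ ^ 2) * x₃ + (x₃ ^ 2 - h ^ 2) * t
      ≤ (r ^ 2 - d * t ^ 2) * x₃ + x₃₀ ^ 2 * t := by
        gcongr
    _ ≤ (r ^ 2 - d * t ^ 2) * h + x₃₀ ^ 2 * t := by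
        linarith [mul_le_mul_of_nonpos_left hx₃ hdt]
    _ < 0 := by linarith

theorem stmt_6_general (a b c h r : ℝ)
    (ha : 0 < a) (hb : 0 < b) (hc : 0 < c) (hh : 0 < h)
    (x₃₀ : ℝ) :
    ∃ ρ₁ : ℝ, max (r / Real.sqrt (min a b)) 0 < ρ₁ ∧
      ∀ x₁ x₂ x₃ : ℝ, h ≤ x₃ → x₃ ≤ x₃₀ → ρ₁ ^ 2 ≤ x₁ ^ 2 + x₂ ^ 2 →
        (r ^ 2 - a * x₁ ^ 2 - b * x₂ ^ 2 - c * x₃ ^ 2) * x₃ +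
          (x₃ ^ 2 - h ^ 2) * Real.sqrt (x₁ ^ 2 + x₂ ^ 2) < 0 := by
  set d := min a b
  have hd : 0 < d := lt_min ha hb
  set ρ₁ := 1 + (r ^ 2 * h + x₃₀ ^ 2) / (d * h)
  have hρ₁ : 1 ≤ ρ₁ := le_add_of_nonneg_right (by positivity)
  have hbound : r ^ 2 * h + x₃₀ ^ 2 < d * h * ρ₁ := by
    rw [mul_add, mul_div_cancel₀ _ (by positivity)]
    linarith [mul_pos hd hh]
  have hr : r ^ 2 < d * ρ₁ ^ 2 := by
    have hlin : r ^ 2 < d * ρ₁ :=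
      lt_of_mul_lt_mul_right (by nlinarith [sq_nonneg x₃₀] : r ^ 2 * h < d * ρ₁ * h) hh.le
    nlinarith [mul_le_mul_of_nonneg_left hρ₁ (by positivity : 0 ≤ d * ρ₁)]
  refine ⟨ρ₁, max_lt (div_sqrt_lt_of_sq_lt_mul_sq hd (by linarith) hr) (by linarith), ?_⟩
  intro x₁ x₂ x₃ hx₃ hx₃' hS
  exact field_add_radial_neg (min_le_left a b) (min_le_right a b) hd.le hc.le hh hρ₁ hbound
    hx₃ hx₃' hS

/-- For `a,b,c,h,r > 0` and `x₃₀ > h`, with `d = min a b`, there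
is `ρ₁ > max (r/√d) 0` such that at all points with `h ≤ x₃ ≤ x₃₀` and
`x₁² + x₂² ≥ ρ₁²` the vector field satisfies `ẋ₃ + ρ̇ < 0`. -/
theorem stmt_6 (a b c h r : ℝ)
    (ha : 0 < a) (hb : 0 < b) (hc : 0 < c) (hh : 0 < h) (hr : 0 < r)
    (x₃₀ : ℝ) (hx₃₀ : h < x₃₀) :
    ∃ ρ₁ : ℝ, max (r / Real.sqrt (min a b)) 0 < ρ₁ ∧
      ∀ x₁ x₂ x₃ : ℝ, h ≤ x₃ → x₃ ≤ x₃₀ → ρ₁ ^ 2 ≤ x₁ ^ 2 + x₂ ^ 2 →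
        (r ^ 2 - a * x₁ ^ 2 - b * x₂ ^ 2 - c * x₃ ^ 2) * x₃ +
          (x₃ ^ 2 - h ^ 2) * Real.sqrt (x₁ ^ 2 + x₂ ^ 2) < 0 :=
  stmt_6_general a b c h r ha hb hc hh x₃₀
end

section
/- (Proposition 3.1.) Let a, b, c, h, r, ω > 0, let x₃₀ > h and R₀ ≥ 0. Then there exists M > 0 such that for every T > 0 and every solution x : [0, T] → ℝ³ of the system x'(t) = f(x(t)) satisfying √(x₁(0)² + x₂(0)²) ≤ R₀, x₃(0) ≤ x₃₀, and h ≤ x₃(t) ≤ x₃₀ for all t ∈ [0, T], one has √(x₁(t)² + x₂(t)²) ≤ M for all t ∈ [0, T]. (Consequently, trajectories with initial conditions in region 1 can enter region 2 only with a finite maximal value of ρ, where this maximal value depends on the initial condition.) -/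
/-!
Along a solution, `V = ρ² x₃^(2/c)` satisfies `V' = V ((2/c)(r² - a x₁² - b x₂²) - 2h²)`: the
`x₃²` terms coming from `ρ²` and from `x₃^(2/c)` cancel. So `V` cannot increase once
`ρ² ≥ r² / min a b`, and in the slab `x₃ ≤ x₃₀` this holds as soon as `V ≥ r² x₃₀^(2/c) / min a b`.
Hence `V` stays below the larger of its initial value and that level, and `x₃ ≥ h` turns this into
a bound on `ρ²`.
-/

open Set Filter Topology

theorem le_max_of_deriv_nonpos_of_le {f f' : ℝ → ℝ} {a b C : ℝ}
    (hf : ∀ x ∈ Icc a b, HasDerivWithinAt f (f' x) (Icc a b) x)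
    (hf' : ∀ x ∈ Icc a b, C ≤ f x → f' x ≤ 0) :
    ∀ x ∈ Icc a b, f x ≤ max (f a) C := by
  intro x hx
  set K := max (f a) C
  -- Compare with the barriers `K + ε (y - a)`, whose slope `ε > 0` beats `f'` where they meet.
  have barrier : ∀ ε > 0, f x ≤ K + ε * (x - a) := by
    intro ε hε
    refine image_le_of_deriv_right_lt_deriv_boundary (B := fun y ↦ K + ε * (y - a))
      (fun y hy ↦ (hf y hy).continuousWithinAt)
      (fun y hy ↦ (hf y (Ico_subset_Icc_self hy)).mono_of_mem_nhdsWithin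
        (Icc_mem_nhdsGE_of_mem hy))
      (by simp [K])
      (fun y ↦ by simpa using ((hasDerivAt_id y).sub_const a).const_mul ε |>.const_add K)
      (fun y hy hfy ↦ ?_) hx
    have hCy : C ≤ f y := by
      rw [hfy]; nlinarith [le_max_right (f a) C, hy.1]
    linarith [hf' y (Ico_subset_Icc_self hy) hCy]
  have hlim : Tendsto (fun ε : ℝ ↦ K + ε * (x - a)) (𝓝[>] 0) (𝓝 K) :=
    tendsto_nhdsWithin_of_tendsto_nhds <|
      (by fun_prop : Continuous fun ε : ℝ ↦ K + ε * (x - a)).tendsto' 0 K (by simp)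
  exact ge_of_tendsto hlim (eventually_nhdsWithin_of_forall barrier)

noncomputable def radialLyapunov (c : ℝ) (x₁ x₂ x₃ : ℝ → ℝ) (t : ℝ) : ℝ :=
  (x₁ t ^ 2 + x₂ t ^ 2) * x₃ t ^ (2 / c)

theorem hasDerivWithinAt_radialLyapunov {a b c h r ω : ℝ} (hc : c ≠ 0) {x₁ x₂ x₃ : ℝ → ℝ}
    {s : Set ℝ} {t : ℝ}
    (hx₁ : HasDerivWithinAt x₁ ((x₃ t ^ 2 - h ^ 2) * x₁ t - ω * x₂ t) s t)
    (hx₂ : HasDerivWithinAt x₂ (ω * x₁ t + (x₃ t ^ 2 - h ^ 2) * x₂ t) s t)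
    (hx₃ : HasDerivWithinAt x₃ ((r ^ 2 - a * x₁ t ^ 2 - b * x₂ t ^ 2 - c * x₃ t ^ 2) * x₃ t) s t)
    (hx₃t : x₃ t ≠ 0) :
    HasDerivWithinAt (radialLyapunov c x₁ x₂ x₃)
      (radialLyapunov c x₁ x₂ x₃ t * (2 / c * (r ^ 2 - a * x₁ t ^ 2 - b * x₂ t ^ 2) - 2 * h ^ 2))
      s t := by
  refine (((hx₁.pow 2).add (hx₂.pow 2)).mul
    (hx₃.rpow_const (p := 2 / c) (.inl hx₃t))).congr_deriv ?_
  rw [Real.rpow_sub_one hx₃t, radialLyapunov, Pi.add_apply, Pi.pow_apply, Pi.pow_apply]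
  field_simp
  ring

theorem radialLyapunov_le_max {a b c h r ω x₃₀ t₀ T : ℝ} (ha : 0 < a) (hb : 0 < b) (hc : 0 < c)
    (hh : 0 < h) {x₁ x₂ x₃ : ℝ → ℝ}
    (hx₁ : ∀ t ∈ Icc t₀ T, HasDerivWithinAt x₁
      ((x₃ t ^ 2 - h ^ 2) * x₁ t - ω * x₂ t) (Icc t₀ T) t)
    (hx₂ : ∀ t ∈ Icc t₀ T, HasDerivWithinAt x₂
      (ω * x₁ t + (x₃ t ^ 2 - h ^ 2) * x₂ t) (Icc t₀ T) t)
    (hx₃ : ∀ t ∈ Icc t₀ T, HasDerivWithinAt x₃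
      ((r ^ 2 - a * x₁ t ^ 2 - b * x₂ t ^ 2 - c * x₃ t ^ 2) * x₃ t) (Icc t₀ T) t)
    (hslab : ∀ t ∈ Icc t₀ T, h ≤ x₃ t ∧ x₃ t ≤ x₃₀) :
    ∀ t ∈ Icc t₀ T, radialLyapunov c x₁ x₂ x₃ t ≤
      max (radialLyapunov c x₁ x₂ x₃ t₀) (r ^ 2 / min a b * x₃₀ ^ (2 / c)) := by
  have hx₃pos : ∀ t ∈ Icc t₀ T, 0 < x₃ t := fun t ht ↦ hh.trans_le (hslab t ht).1
  refine le_max_of_deriv_nonpos_of_le (fun t ht ↦ hasDerivWithinAt_radialLyapunov hc.ne'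
    (hx₁ t ht) (hx₂ t ht) (hx₃ t ht) (hx₃pos t ht).ne') fun t ht hV ↦ ?_
  have hpow : 0 < x₃ t ^ (2 / c) := Real.rpow_pos_of_pos (hx₃pos t ht) _
  have hρ : r ^ 2 / min a b ≤ x₁ t ^ 2 + x₂ t ^ 2 := by
    refine le_of_mul_le_mul_right (hV.trans' ?_) hpow
    gcongr
    exacts [(hx₃pos t ht).le, (hslab t ht).2]
  have hdrive : r ^ 2 - a * x₁ t ^ 2 - b * x₂ t ^ 2 ≤ 0 := by
    rw [div_le_iff₀ (lt_min ha hb)] at hρ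
    nlinarith [min_le_left a b, min_le_right a b, sq_nonneg (x₁ t), sq_nonneg (x₂ t)]
  refine mul_nonpos_of_nonneg_of_nonpos (by unfold radialLyapunov; positivity) ?_
  linarith [mul_nonpos_of_nonneg_of_nonpos (by positivity : (0 : ℝ) ≤ 2 / c) hdrive, sq_nonneg h]

theorem stmt_7_general (a b c h r ω : ℝ)
    (ha : 0 < a) (hb : 0 < b) (hc : 0 < c) (hh : 0 < h)
    (x₃₀ : ℝ) (R₀ : ℝ) :
    ∃ M : ℝ, 0 < M ∧
      ∀ T : ℝ, 0 < T →
      ∀ x₁ x₂ x₃ : ℝ → ℝ,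
        (∀ t ∈ Set.Icc (0:ℝ) T, HasDerivWithinAt x₁
          ((x₃ t ^ 2 - h ^ 2) * x₁ t - ω * x₂ t) (Set.Icc 0 T) t) →
        (∀ t ∈ Set.Icc (0:ℝ) T, HasDerivWithinAt x₂
          (ω * x₁ t + (x₃ t ^ 2 - h ^ 2) * x₂ t) (Set.Icc 0 T) t) →
        (∀ t ∈ Set.Icc (0:ℝ) T, HasDerivWithinAt x₃
          ((r ^ 2 - a * x₁ t ^ 2 - b * x₂ t ^ 2 - c * x₃ t ^ 2) * x₃ t)
          (Set.Icc 0 T) t) →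
        Real.sqrt (x₁ 0 ^ 2 + x₂ 0 ^ 2) ≤ R₀ →
        x₃ 0 ≤ x₃₀ →
        (∀ t ∈ Set.Icc (0:ℝ) T, h ≤ x₃ t ∧ x₃ t ≤ x₃₀) →
        ∀ t ∈ Set.Icc (0:ℝ) T, Real.sqrt (x₁ t ^ 2 + x₂ t ^ 2) ≤ M := by
  set p := 2 / c
  refine ⟨√(max (R₀ ^ 2) (r ^ 2 / min a b) * x₃₀ ^ p / h ^ p) + 1, by positivity, ?_⟩
  intro T _ x₁ x₂ x₃ hx₁ hx₂ hx₃ hρ₀ hx₃₀ hslab t ht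
  have hx₃_0 : 0 < x₃ 0 := hh.trans_le (hslab 0 ⟨le_rfl, ht.1.trans ht.2⟩).1
  have hx₃₀pos : 0 < x₃₀ := hx₃_0.trans_le hx₃₀
  have hV₀ : radialLyapunov c x₁ x₂ x₃ 0 ≤ R₀ ^ 2 * x₃₀ ^ p :=
    mul_le_mul ((Real.sqrt_le_left ((Real.sqrt_nonneg _).trans hρ₀)).mp hρ₀)
      (Real.rpow_le_rpow hx₃_0.le hx₃₀ (by positivity)) (by positivity) (sq_nonneg R₀)
  have hρ : (x₁ t ^ 2 + x₂ t ^ 2) * h ^ p ≤ max (R₀ ^ 2) (r ^ 2 / min a b) * x₃₀ ^ p :=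
    calc (x₁ t ^ 2 + x₂ t ^ 2) * h ^ p ≤ radialLyapunov c x₁ x₂ x₃ t := by
          unfold radialLyapunov; gcongr; exact (hslab t ht).1
      _ ≤ max (radialLyapunov c x₁ x₂ x₃ 0) (r ^ 2 / min a b * x₃₀ ^ p) :=
          radialLyapunov_le_max ha hb hc hh hx₁ hx₂ hx₃ hslab t ht
      _ ≤ max (R₀ ^ 2) (r ^ 2 / min a b) * x₃₀ ^ p := by
          rw [max_mul_of_nonneg _ _ (by positivity)]
          exact max_le_max_right _ hV₀
  calc √(x₁ t ^ 2 + x₂ t ^ 2) ≤ √(max (R₀ ^ 2) (r ^ 2 / min a b) * x₃₀ ^ p / h ^ p) :=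
        Real.sqrt_le_sqrt ((le_div_iff₀ (by positivity)).mpr hρ)
    _ ≤ _ := le_add_of_nonneg_right zero_le_one

/-- Proposition 3.1: Trajectories of the candidate chaotic
system that stay in the slab `h ≤ x₃ ≤ x₃₀` and start with radius at most `R₀`
have radius bounded by a constant `M` depending only on the parameters, `x₃₀`
and `R₀`. -/
theorem stmt_7 (a b c h r ω : ℝ)
    (ha : 0 < a) (hb : 0 < b) (hc : 0 < c) (hh : 0 < h) (hr : 0 < r) (hω : 0 < ω)
    (x₃₀ : ℝ) (hx₃₀ : h < x₃₀) (R₀ : ℝ) (hR₀ : 0 ≤ R₀) :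
    ∃ M : ℝ, 0 < M ∧
      ∀ T : ℝ, 0 < T →
      ∀ x₁ x₂ x₃ : ℝ → ℝ,
        (∀ t ∈ Set.Icc (0:ℝ) T, HasDerivWithinAt x₁
          ((x₃ t ^ 2 - h ^ 2) * x₁ t - ω * x₂ t) (Set.Icc 0 T) t) →
        (∀ t ∈ Set.Icc (0:ℝ) T, HasDerivWithinAt x₂
          (ω * x₁ t + (x₃ t ^ 2 - h ^ 2) * x₂ t) (Set.Icc 0 T) t) →
        (∀ t ∈ Set.Icc (0:ℝ) T, HasDerivWithinAt x₃
          ((r ^ 2 - a * x₁ t ^ 2 - b * x₂ t ^ 2 - c * x₃ t ^ 2) * x₃ t)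
          (Set.Icc 0 T) t) →
        Real.sqrt (x₁ 0 ^ 2 + x₂ 0 ^ 2) ≤ R₀ →
        x₃ 0 ≤ x₃₀ →
        (∀ t ∈ Set.Icc (0:ℝ) T, h ≤ x₃ t ∧ x₃ t ≤ x₃₀) →
        ∀ t ∈ Set.Icc (0:ℝ) T, Real.sqrt (x₁ t ^ 2 + x₂ t ^ 2) ≤ M :=
  stmt_7_general a b c h r ω ha hb hc hh x₃₀ R₀
end

section
/- For parameters a, b, c, h, r, ω > 0, every solution x : [0, ∞) → ℝ³ of the system x'(t) = f(x(t)) is bounded; that is, there exists M > 0 (depending on the solution) such that ‖x(t)‖ ≤ M for all t ≥ 0. -/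
/-!
The rotation by `ω` preserves `x₁² + x₂²`, and for `m ≤ min a b` the quartic coupling terms in the
derivative of `V = m (x₁² + x₂²) + x₃²` are dissipative; completing the square in `x₃²` then gives
`V' ≤ -2h² V + (r² + h²)² / (2c)` along a solution. Hence `V` never crosses a level `C` with
`(r² + h²)² / (2c) < 2h² C`.
-/

theorem le_of_hasDerivAt_le_neg_mul_add {f f' : ℝ → ℝ} {t₀ k K C : ℝ}
    (hf : ∀ t, t₀ ≤ t → HasDerivAt f (f' t) t)
    (hf' : ∀ t, t₀ ≤ t → f' t ≤ -k * f t + K)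
    (h₀ : f t₀ ≤ C) (hC : K < k * C) :
    ∀ t, t₀ ≤ t → f t ≤ C := by
  intro t ht
  refine image_le_of_deriv_right_lt_deriv_boundary (B := fun _ => C) (B' := fun _ => 0)
    (fun s hs => (hf s hs.1).continuousAt.continuousWithinAt)
    (fun s hs => (hf s hs.1).hasDerivWithinAt) h₀ (fun _ => hasDerivAt_const _ C)
    (fun s hs hfs => ?_) ⟨ht, le_rfl⟩
  have := hf' s hs.1
  rw [hfs] at this
  linarith

variable {a b c h r ω m : ℝ} {x₁ x₂ x₃ : ℝ → ℝ} {t : ℝ}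

theorem hasDerivAt_lyapunov
    (hx₁ : HasDerivAt x₁ ((x₃ t ^ 2 - h ^ 2) * x₁ t - ω * x₂ t) t)
    (hx₂ : HasDerivAt x₂ (ω * x₁ t + (x₃ t ^ 2 - h ^ 2) * x₂ t) t)
    (hx₃ : HasDerivAt x₃ ((r ^ 2 - a * x₁ t ^ 2 - b * x₂ t ^ 2 - c * x₃ t ^ 2) * x₃ t) t) :
    HasDerivAt (fun s => m * (x₁ s ^ 2 + x₂ s ^ 2) + x₃ s ^ 2)
      (2 * m * (x₃ t ^ 2 - h ^ 2) * (x₁ t ^ 2 + x₂ t ^ 2)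
        + 2 * (r ^ 2 - a * x₁ t ^ 2 - b * x₂ t ^ 2 - c * x₃ t ^ 2) * x₃ t ^ 2) t := by
  have := (((hx₁.pow 2).add (hx₂.pow 2)).const_mul m).add (hx₃.pow 2)
  exact this.congr_deriv (by push_cast; ring)

theorem lyapunov_deriv_le (hma : m ≤ a) (hmb : m ≤ b) (hc : 0 < c) (u v w : ℝ) :
    2 * m * (w ^ 2 - h ^ 2) * (u ^ 2 + v ^ 2)
        + 2 * (r ^ 2 - a * u ^ 2 - b * v ^ 2 - c * w ^ 2) * w ^ 2
      ≤ -(2 * h ^ 2) * (m * (u ^ 2 + v ^ 2) + w ^ 2) + (r ^ 2 + h ^ 2) ^ 2 / (2 * c) := by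
  have hcoupling : m * (u ^ 2 + v ^ 2) * w ^ 2 ≤ (a * u ^ 2 + b * v ^ 2) * w ^ 2 := by
    gcongr
    nlinarith [mul_le_mul_of_nonneg_right hma (sq_nonneg u),
      mul_le_mul_of_nonneg_right hmb (sq_nonneg v)]
  have hsquare :
      2 * (r ^ 2 + h ^ 2) * w ^ 2 - 2 * c * (w ^ 2) ^ 2 ≤ (r ^ 2 + h ^ 2) ^ 2 / (2 * c) := by
    rw [le_div_iff₀ (by positivity)]
    nlinarith [sq_nonneg (2 * c * w ^ 2 - (r ^ 2 + h ^ 2))]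
  nlinarith

theorem stmt_8_general (a b c h r ω : ℝ)
    (ha : 0 < a) (hb : 0 < b) (hc : 0 < c) (hh : 0 < h)
    (x₁ x₂ x₃ : ℝ → ℝ)
    (hx₁ : ∀ t : ℝ, 0 ≤ t → HasDerivAt x₁ ((x₃ t ^ 2 - h ^ 2) * x₁ t - ω * x₂ t) t)
    (hx₂ : ∀ t : ℝ, 0 ≤ t → HasDerivAt x₂ (ω * x₁ t + (x₃ t ^ 2 - h ^ 2) * x₂ t) t)
    (hx₃ : ∀ t : ℝ, 0 ≤ t → HasDerivAt x₃
      ((r ^ 2 - a * x₁ t ^ 2 - b * x₂ t ^ 2 - c * x₃ t ^ 2) * x₃ t) t) :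
    ∃ M : ℝ, 0 < M ∧ ∀ t : ℝ, 0 ≤ t →
      Real.sqrt (x₁ t ^ 2 + x₂ t ^ 2 + x₃ t ^ 2) ≤ M := by
  set m := min (min a b) 1
  have hm : 0 < m := by positivity
  set V := fun s => m * (x₁ s ^ 2 + x₂ s ^ 2) + x₃ s ^ 2
  set K := (r ^ 2 + h ^ 2) ^ 2 / (2 * c)
  set C := max (V 0) (K / (2 * h ^ 2) + 1)
  have hC : K < 2 * h ^ 2 * C :=
    calc K < 2 * h ^ 2 * (K / (2 * h ^ 2) + 1) := by
          rw [mul_add, mul_div_cancel₀ _ (by positivity)]; linarith [pow_pos hh 2]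
      _ ≤ 2 * h ^ 2 * C := by gcongr; exact le_max_right _ _
  have hV : ∀ t, 0 ≤ t → V t ≤ C :=
    le_of_hasDerivAt_le_neg_mul_add
      (fun t ht => hasDerivAt_lyapunov (hx₁ t ht) (hx₂ t ht) (hx₃ t ht))
      (fun t _ => lyapunov_deriv_le (by simp [m]) (by simp [m]) hc _ _ _) (le_max_left _ _) hC
  have hCpos : 0 < C := lt_max_of_lt_right (by positivity)
  refine ⟨Real.sqrt (C / m), Real.sqrt_pos.mpr (by positivity), fun t ht => ?_⟩
  gcongr
  rw [le_div_iff₀ hm]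
  have hm1 : m ≤ 1 := min_le_right _ _
  nlinarith [hV t ht, sq_nonneg (x₃ t)]

/-- Every solution of the candidate chaotic system on `[0,∞)` is
bounded: there is `M > 0` with `‖x(t)‖ ≤ M` for all `t ≥ 0`. -/
theorem stmt_8 (a b c h r ω : ℝ)
    (ha : 0 < a) (hb : 0 < b) (hc : 0 < c) (hh : 0 < h) (hr : 0 < r) (hω : 0 < ω)
    (x₁ x₂ x₃ : ℝ → ℝ)
    (hx₁ : ∀ t : ℝ, 0 ≤ t → HasDerivAt x₁ ((x₃ t ^ 2 - h ^ 2) * x₁ t - ω * x₂ t) t)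
    (hx₂ : ∀ t : ℝ, 0 ≤ t → HasDerivAt x₂ (ω * x₁ t + (x₃ t ^ 2 - h ^ 2) * x₂ t) t)
    (hx₃ : ∀ t : ℝ, 0 ≤ t → HasDerivAt x₃
      ((r ^ 2 - a * x₁ t ^ 2 - b * x₂ t ^ 2 - c * x₃ t ^ 2) * x₃ t) t) :
    ∃ M : ℝ, 0 < M ∧ ∀ t : ℝ, 0 ≤ t →
      Real.sqrt (x₁ t ^ 2 + x₂ t ^ 2 + x₃ t ^ 2) ≤ M :=
  stmt_8_general a b c h r ω ha hb hc hh x₁ x₂ x₃ hx₁ hx₂ hx₃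
end

section
/- Let c, r > 0 and let u : [0, ∞) → ℝ be a differentiable function satisfying u'(t) = (r² − c·u(t)²)·u(t) for all t ≥ 0, with u(0) > 0. Then u(t) → r/√c as t → ∞. (This expresses that the stable manifold of the equilibrium Z = (0, 0, r/√c) of the system contains the positive x₃-axis {(0,0,x₃) : x₃ > 0}.) -/
/-!
On `[0, ∞)` the equation is linear in `u` with the continuous coefficient `r² − c u²`, so
the integrating factor gives `u t = u 0 · exp (∫₀ᵗ (r² − c u²))`; in particular `u` stays
positive. It is also a Bernoulli equation: `w = u⁻² − c / r²` satisfies `w' = −2 r² w`, hence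
`w t = w 0 · exp (−2 r² t) → 0`, i.e. `u t ^ 2 → r² / c`, and positivity selects `r / √c`.
-/

open Set Filter Topology Real

theorem eq_mul_exp_integral_of_hasDerivAt {g u : ℝ → ℝ} {a : ℝ} (hg : Continuous g)
    (hu : ∀ t, a ≤ t → HasDerivAt u (g t * u t) t) {t : ℝ} (ht : a ≤ t) :
    u t = u a * exp (∫ s in a..t, g s) := by
  set F : ℝ → ℝ := fun t => ∫ s in a..t, g s
  have hF : ∀ s, HasDerivAt F (g s) s := fun s => (hg.integral_hasStrictDerivAt a s).hasDerivAt
  have hderiv : ∀ s, a ≤ s → HasDerivAt (fun s => u s * exp (-F s)) 0 s := fun s hs => by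
    refine ((hu s hs).mul (hF s).neg.exp).congr_deriv ?_
    simp only [Pi.neg_apply]
    ring
  have hconst : u t * exp (-F t) = u a * exp (-F a) :=
    constant_of_has_deriv_right_zero (fun s hs => (hderiv s hs.1).continuousAt.continuousWithinAt)
      (fun s hs => (hderiv s hs.1).hasDerivWithinAt) t ⟨ht, le_rfl⟩
  have hFa : F a = 0 := intervalIntegral.integral_same
  rw [hFa, neg_zero, exp_zero, mul_one] at hconst
  rw [← hconst, mul_assoc, ← exp_add, neg_add_cancel, exp_zero, mul_one]

theorem pos_of_hasDerivAt_eq_mul {g u : ℝ → ℝ} {a : ℝ} (hg : ContinuousOn g (Ici a))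
    (hu : ∀ t, a ≤ t → HasDerivAt u (g t * u t) t) (ha : 0 < u a) {t : ℝ} (ht : a ≤ t) :
    0 < u t := by
  have hg' : Continuous fun s => g (max s a) :=
    hg.comp_continuous (continuous_id.max continuous_const) fun s => le_max_right s a
  have hu' : ∀ s, a ≤ s → HasDerivAt u (g (max s a) * u s) s := fun s hs => by
    simpa only [max_eq_left hs] using hu s hs
  rw [eq_mul_exp_integral_of_hasDerivAt hg' hu' ht]
  exact mul_pos ha (exp_pos _)

theorem tendsto_inv_sq_of_hasDerivAt_bernoulli {α β a : ℝ} {u : ℝ → ℝ} (hα : 0 < α)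
    (hu : ∀ t, a ≤ t → HasDerivAt u ((α - β * u t ^ 2) * u t) t)
    (hpos : ∀ t, a ≤ t → 0 < u t) :
    Tendsto (fun t => (u t ^ 2)⁻¹) atTop (𝓝 (β / α)) := by
  set w : ℝ → ℝ := fun t => (u t ^ 2)⁻¹ - β / α
  have hw : ∀ t, a ≤ t → HasDerivAt w (-(2 * α) * w t) t := fun t ht => by
    have hut : u t ≠ 0 := (hpos t ht).ne'
    refine ((((hu t ht).pow 2).inv (pow_ne_zero 2 hut)).sub_const (β / α)).congr_deriv ?_
    simp only [w, Pi.pow_apply]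
    field_simp
    ring
  have hw_eq : ∀ t, a ≤ t → w t = w a * exp (-(2 * α) * (t - a)) := fun t ht => by
    simpa [mul_comm, mul_left_comm] using
      eq_mul_exp_integral_of_hasDerivAt continuous_const hw ht
  have hexp : Tendsto (fun t => exp (-(2 * α) * (t - a))) atTop (𝓝 0) :=
    tendsto_exp_atBot.comp ((tendsto_id.atTop_add tendsto_const_nhds).const_mul_atTop_of_neg
      (by linarith))
  have hw_lim : Tendsto w atTop (𝓝 0) := by
    simpa using (hexp.const_mul (w a)).congr'
      ((eventually_ge_atTop a).mono fun t ht => (hw_eq t ht).symm)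
  simpa [w] using hw_lim.add_const (β / α)

/-- A solution of the scalar equation `u' = (r² − cu²)u` on
`[0,∞)` with `u(0) > 0` converges to `r/√c` as `t → ∞` (the stable manifold of
the equilibrium `Z = (0,0,r/√c)` contains the positive `x₃`-axis). -/
theorem stmt_9 (c r : ℝ) (hc : 0 < c) (hr : 0 < r)
    (u : ℝ → ℝ)
    (hu : ∀ t : ℝ, 0 ≤ t → HasDerivAt u ((r ^ 2 - c * u t ^ 2) * u t) t)
    (h0 : 0 < u 0) :
    Filter.Tendsto u Filter.atTop (nhds (r / Real.sqrt c)) := by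
  have hcoeff : ContinuousOn (fun t => r ^ 2 - c * u t ^ 2) (Ici 0) := fun t ht =>
    (continuousAt_const.sub (continuousAt_const.mul
      ((hu t ht).continuousAt.pow 2))).continuousWithinAt
  have hpos : ∀ t, 0 ≤ t → 0 < u t := fun t ht => pos_of_hasDerivAt_eq_mul hcoeff hu h0 ht
  have hsq : Tendsto (fun t => u t ^ 2) atTop (𝓝 (r ^ 2 / c)) := by
    simpa [inv_div] using
      (tendsto_inv_sq_of_hasDerivAt_bernoulli (by positivity) hu hpos).inv₀ (by positivity)
  have hlim : √(r ^ 2 / c) = r / √c := by rw [sqrt_div' _ hc.le, sqrt_sq hr.le]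
  rw [← hlim]
  exact hsq.sqrt.congr' ((eventually_ge_atTop 0).mono fun t ht => sqrt_sq (hpos t ht).le)
end

section
/- Let c, r > 0 and let u : ℝ → ℝ be a differentiable function satisfying u'(t) = (r² − c·u(t)²)·u(t) for all t ∈ ℝ, with 0 < u(0) < r/√c. Then 0 < u(t) < r/√c for all t ∈ ℝ, and u(t) → 0 as t → −∞. (This expresses that the unstable manifold of the origin O = (0,0,0) of the system equals {(0, 0, x₃) : 0 < |x₃| < r/√c}.) -/
/-!
Both `0` and `r/√c` are equilibria of the locally Lipschitz field `x ↦ (r² - cx²)x`, so by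
uniqueness of solutions a nonconstant orbit never reaches them; by connectedness of `ℝ` it stays
in `(0, r/√c)`, where the field is positive. Hence `u` is increasing and bounded below, so it has
a limit `L ∈ [0, r/√c)` at `-∞`; since `u'` then tends to the value of the field at `L`, and a
convergent function cannot have a derivative with nonzero limit, `L` is an equilibrium, i.e. `L = 0`.
-/

open Set Filter Topology

theorem eq_const_of_hasDerivAt_of_apply_eq_zero {E : Type*} [NormedAddCommGroup E]
    [NormedSpace ℝ E] {v : E → E} (hv : LocallyLipschitz v) {u : ℝ → E}
    (hu : ∀ t, HasDerivAt u (v (u t)) t) {p : E} (hp : v p = 0) {t₀ : ℝ} (ht₀ : u t₀ = p) :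
    u = fun _ ↦ p := by
  have hcont : Continuous u := continuous_iff_continuousAt.2 fun t ↦ (hu t).continuousAt
  suffices h : {t | u t = p} = univ from funext (eq_univ_iff_forall.1 h)
  refine IsClopen.eq_univ ⟨isClosed_eq hcont continuous_const, ?_⟩ ⟨t₀, ht₀⟩
  refine isOpen_iff_mem_nhds.2 fun t (ht : u t = p) ↦ ?_
  obtain ⟨K, S, hS, hvS⟩ := hv p
  have hS' : ∀ᶠ s in 𝓝 t, u s ∈ S := hcont.continuousAt.preimage_mem_nhds (ht ▸ hS)
  exact ODE_solution_unique_of_eventually (v := fun _ ↦ v) (g := fun _ ↦ p)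
    (.of_forall fun _ ↦ hvS) (hS'.mono fun s hs ↦ ⟨hu s, hs⟩)
    (.of_forall fun s ↦ ⟨hp ▸ hasDerivAt_const s p, mem_of_mem_nhds hS⟩) ht

theorem mem_Ioo_of_continuous_of_forall_ne {X α : Type*} [TopologicalSpace X]
    [PreconnectedSpace X] [LinearOrder α] [TopologicalSpace α] [OrderClosedTopology α]
    {u : X → α} (hu : Continuous u) {a b : α} {x₀ : X} (hx₀ : u x₀ ∈ Ioo a b)
    (ha : ∀ x, u x ≠ a) (hb : ∀ x, u x ≠ b) (x : X) : u x ∈ Ioo a b := by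
  refine ⟨lt_of_not_ge fun hxa ↦ ?_, lt_of_not_ge fun hxb ↦ ?_⟩
  · obtain ⟨y, hy⟩ := intermediate_value_univ x x₀ hu ⟨hxa, hx₀.1.le⟩
    exact ha y hy
  · obtain ⟨y, hy⟩ := intermediate_value_univ x₀ x hu ⟨hx₀.2.le, hxb⟩
    exact hb y hy

theorem nonpos_of_tendsto_atBot_of_tendsto_deriv {u u' : ℝ → ℝ}
    (hu : ∀ t, HasDerivAt u (u' t) t) {L m : ℝ} (hL : Tendsto u atBot (𝓝 L))
    (hm : Tendsto u' atBot (𝓝 m)) : m ≤ 0 := by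
  by_contra! hm₀
  obtain ⟨T, hT⟩ := eventually_atBot.1 (hm.eventually (eventually_ge_nhds (half_lt_self hm₀)))
  have hslope : ∀ t ≤ T, u t ≤ (u T - m / 2 * T) + m / 2 * t := fun t ht ↦ by
    have := (convex_Iic T).mul_sub_le_image_sub_of_le_deriv
      (HasDerivAt.continuousOn fun s _ ↦ hu s)
      (fun s _ ↦ (hu s).differentiableAt.differentiableWithinAt)
      (fun s hs ↦ (hu s).deriv ▸ hT s (interior_subset (s := Iic T) hs)) t ht T (le_refl T) ht
    linarith
  have hbot : Tendsto u atBot atBot :=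
    tendsto_atBot_mono' _ (eventually_atBot.2 ⟨T, hslope⟩)
      (tendsto_atBot_add_const_left _ _ (tendsto_id.const_mul_atBot (half_pos hm₀)))
  exact not_tendsto_nhds_of_tendsto_atBot hbot L hL

theorem eq_zero_of_tendsto_atBot_of_tendsto_deriv {u u' : ℝ → ℝ}
    (hu : ∀ t, HasDerivAt u (u' t) t) {L m : ℝ} (hL : Tendsto u atBot (𝓝 L))
    (hm : Tendsto u' atBot (𝓝 m)) : m = 0 :=
  le_antisymm (nonpos_of_tendsto_atBot_of_tendsto_deriv hu hL hm) <| neg_nonpos.1 <|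
    nonpos_of_tendsto_atBot_of_tendsto_deriv (fun t ↦ (hu t).neg) hL.neg hm.neg

theorem mul_sq_lt_sq_of_lt_div_sqrt {c r x : ℝ} (hc : 0 < c) (hx : 0 ≤ x)
    (h : x < r / Real.sqrt c) : c * x ^ 2 < r ^ 2 := by
  have hxr : x * Real.sqrt c < r := (lt_div_iff₀ (Real.sqrt_pos.2 hc)).1 h
  calc c * x ^ 2 = (x * Real.sqrt c) ^ 2 := by rw [mul_pow, Real.sq_sqrt hc.le, mul_comm]
    _ < r ^ 2 := pow_lt_pow_left₀ hxr (by positivity) two_ne_zero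

theorem stmt_10_general (c r : ℝ) (hc : 0 < c)
    (u : ℝ → ℝ)
    (hu : ∀ t : ℝ, HasDerivAt u ((r ^ 2 - c * u t ^ 2) * u t) t)
    (h0 : 0 < u 0) (h0' : u 0 < r / Real.sqrt c) :
    (∀ t : ℝ, 0 < u t ∧ u t < r / Real.sqrt c) ∧
      Filter.Tendsto u Filter.atBot (nhds 0) := by
  set v : ℝ → ℝ := fun x ↦ (r ^ 2 - c * x ^ 2) * x
  set K := r / Real.sqrt c
  have hv : LocallyLipschitz v := ContDiff.locallyLipschitz (𝕂 := ℝ) (by fun_prop)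
  have hcK : c * K ^ 2 = r ^ 2 := by
    rw [div_pow, Real.sq_sqrt hc.le, mul_div_cancel₀ _ hc.ne']
  have hv_pos {x : ℝ} (hx : x ∈ Ioo 0 K) : 0 < v x :=
    mul_pos (sub_pos.2 (mul_sq_lt_sq_of_lt_div_sqrt hc hx.1.le hx.2)) hx.1
  have hne {p : ℝ} (hp : v p = 0) (hp0 : u 0 ≠ p) (t : ℝ) : u t ≠ p := fun ht ↦
    hp0 (congrFun (eq_const_of_hasDerivAt_of_apply_eq_zero hv hu hp ht) 0)
  have hbound : ∀ t, u t ∈ Ioo 0 K :=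
    mem_Ioo_of_continuous_of_forall_ne (continuous_iff_continuousAt.2 fun t ↦ (hu t).continuousAt)
      ⟨h0, h0'⟩ (hne (by simp [v]) h0.ne') (hne (by simp [v, hcK]) h0'.ne)
  refine ⟨hbound, ?_⟩
  have hmono : Monotone u := monotone_of_hasDerivAt_nonneg hu fun t ↦ (hv_pos (hbound t)).le
  have hbdd : BddBelow (range u) := ⟨0, forall_mem_range.2 fun t ↦ (hbound t).1.le⟩
  set L := ⨅ t, u t
  have hL : Tendsto u atBot (𝓝 L) := tendsto_atBot_ciInf hmono hbdd
  have hL0 : 0 ≤ L := le_ciInf fun t ↦ (hbound t).1.le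
  have hLK : L < K := (ciInf_le hbdd 0).trans_lt h0'
  have hvL : v L = 0 := eq_zero_of_tendsto_atBot_of_tendsto_deriv hu hL
    ((hv.continuous.tendsto L).comp hL)
  rcases hL0.eq_or_lt with hL0 | hL0
  · exact hL0 ▸ hL
  · exact absurd hvL (hv_pos ⟨hL0, hLK⟩).ne'

/-- A solution of the scalar equation `u' = (r² − cu²)u` on ℝ
with `0 < u(0) < r/√c` satisfies `0 < u(t) < r/√c` for all `t` and converges to
`0` as `t → −∞` (the unstable manifold of the origin equals
`{(0,0,x₃) : 0 < |x₃| < r/√c}`). -/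
theorem stmt_10 (c r : ℝ) (hc : 0 < c) (hr : 0 < r)
    (u : ℝ → ℝ)
    (hu : ∀ t : ℝ, HasDerivAt u ((r ^ 2 - c * u t ^ 2) * u t) t)
    (h0 : 0 < u 0) (h0' : u 0 < r / Real.sqrt c) :
    (∀ t : ℝ, 0 < u t ∧ u t < r / Real.sqrt c) ∧
      Filter.Tendsto u Filter.atBot (nhds 0) :=
  stmt_10_general c r hc u hu h0 h0'
end

section
/- For parameters a, b, c, h, r, ω > 0, let x : [0, ∞) → ℝ³ be a solution of the system x'(t) = f(x(t)) with x₃(0) = 0. Then x₁(t)² + x₂(t)² = (x₁(0)² + x₂(0)²)·exp(−2h²t) for all t ≥ 0; in particular x(t) → (0,0,0) as t → ∞. (This expresses that the stable manifold of the origin O contains the plane {x₃ = 0}: all orbits in this plane are attracted to the origin.) -/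
open Set Filter Real Topology

/-! The third equation is linear in `x₃`: `x₃' = g(t) x₃` with `g` continuous, so Grönwall's
inequality keeps `x₃ ≡ 0` once `x₃(0) = 0`. On the plane `x₃ = 0` the first two equations read
`x' = -h² x + ω J x` with `J` the rotation by `π/2`, and `J x ⊥ x`; hence `u = x₁² + x₂²` solves
`u' = -2h² u` and decays like `exp(-2h² t)`. -/

theorem eq_zero_of_hasDerivAt_smul_self {E : Type*} [NormedAddCommGroup E] [NormedSpace ℝ E]
    {y : ℝ → E} {g : ℝ → ℝ} {t₀ : ℝ} (hg : ContinuousOn g (Ici t₀))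
    (hy : ∀ t, t₀ ≤ t → HasDerivAt y (g t • y t) t) (h₀ : y t₀ = 0) :
    ∀ t, t₀ ≤ t → y t = 0 := by
  intro T hT
  obtain ⟨s, -, hs⟩ := isCompact_Icc.exists_isMaxOn (nonempty_Icc.2 hT)
    ((hg.mono Icc_subset_Ici_self).abs)
  refine eq_zero_of_abs_deriv_le_mul_abs_self_of_eq_zero_right (K := |g s|)
    (fun t ht => (hy t ht.1).continuousAt.continuousWithinAt)
    (fun t ht => (hy t ht.1).hasDerivWithinAt) h₀ (fun t ht => ?_) T ⟨hT, le_rfl⟩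
  rw [norm_smul, Real.norm_eq_abs]
  exact mul_le_mul_of_nonneg_right (hs ⟨ht.1, ht.2.le⟩) (norm_nonneg _)

theorem eq_mul_exp_of_hasDerivAt_mul_self {u : ℝ → ℝ} {k : ℝ}
    (hu : ∀ t, 0 ≤ t → HasDerivAt u (k * u t) t) {t : ℝ} (ht : 0 ≤ t) :
    u t = u 0 * exp (k * t) := by
  have hv : ∀ s, 0 ≤ s → HasDerivAt (fun s => exp (-(k * s)) * u s) 0 s := fun s hs => by
    have he : HasDerivAt (fun s => exp (-(k * s))) (exp (-(k * s)) * -k) s := by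
      simpa using ((hasDerivAt_id' s).const_mul k).neg.exp
    exact (he.mul (hu s hs)).congr_deriv (by ring)
  have hconst := constant_of_has_deriv_right_zero
    (fun s hs => (hv s hs.1).continuousAt.continuousWithinAt)
    (fun s hs => (hv s hs.1).hasDerivWithinAt) t ⟨ht, le_rfl⟩
  simp only [mul_zero, neg_zero, exp_zero, one_mul] at hconst
  rw [← hconst, mul_right_comm, ← exp_add, neg_add_cancel, exp_zero, one_mul]

theorem Filter.Tendsto.of_sq_add_sq_tendsto_zero {α : Type*} {l : Filter α} {f g : α → ℝ}
    (hfg : Tendsto (fun a => f a ^ 2 + g a ^ 2) l (𝓝 0)) : Tendsto f l (𝓝 0) := by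
  have hsqrt : Tendsto (fun a => √(f a ^ 2 + g a ^ 2)) l (𝓝 0) := by
    have h := (continuous_sqrt.tendsto 0).comp hfg
    rwa [sqrt_zero] at h
  exact squeeze_zero_norm (fun a => abs_le_sqrt (le_add_of_nonneg_right (sq_nonneg (g a)))) hsqrt

theorem tendsto_exp_mul_atTop_nhds_zero {k : ℝ} (hk : k < 0) :
    Tendsto (fun t => exp (k * t)) atTop (𝓝 0) :=
  tendsto_exp_atBot.comp (tendsto_id.const_mul_atTop_of_neg hk)

theorem stmt_11_general (a b c h r ω : ℝ)
    (hh : 0 < h)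
    (x₁ x₂ x₃ : ℝ → ℝ)
    (hx₁ : ∀ t : ℝ, 0 ≤ t → HasDerivAt x₁ ((x₃ t ^ 2 - h ^ 2) * x₁ t - ω * x₂ t) t)
    (hx₂ : ∀ t : ℝ, 0 ≤ t → HasDerivAt x₂ (ω * x₁ t + (x₃ t ^ 2 - h ^ 2) * x₂ t) t)
    (hx₃ : ∀ t : ℝ, 0 ≤ t → HasDerivAt x₃
      ((r ^ 2 - a * x₁ t ^ 2 - b * x₂ t ^ 2 - c * x₃ t ^ 2) * x₃ t) t)
    (h0 : x₃ 0 = 0) :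
    (∀ t : ℝ, 0 ≤ t →
      x₁ t ^ 2 + x₂ t ^ 2 = (x₁ 0 ^ 2 + x₂ 0 ^ 2) * Real.exp (-2 * h ^ 2 * t)) ∧
    Filter.Tendsto x₁ Filter.atTop (nhds 0) ∧
    Filter.Tendsto x₂ Filter.atTop (nhds 0) ∧
    Filter.Tendsto x₃ Filter.atTop (nhds 0) := by
  have hc : ∀ {y y' : ℝ → ℝ}, (∀ t, 0 ≤ t → HasDerivAt y (y' t) t) → ContinuousOn y (Ici 0) :=
    fun hy t ht => (hy t ht).continuousAt.continuousWithinAt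
  have hc₁ := hc hx₁
  have hc₂ := hc hx₂
  have hc₃ := hc hx₃
  have hx₃_zero : ∀ t, 0 ≤ t → x₃ t = 0 :=
    eq_zero_of_hasDerivAt_smul_self (by fun_prop) hx₃ h0
  have hdecay : ∀ t, 0 ≤ t → x₁ t ^ 2 + x₂ t ^ 2 = (x₁ 0 ^ 2 + x₂ 0 ^ 2) * exp (-2 * h ^ 2 * t) :=
    fun t ht => eq_mul_exp_of_hasDerivAt_mul_self (u := fun t => x₁ t ^ 2 + x₂ t ^ 2)
      (fun s hs => (((hx₁ s hs).pow 2).add ((hx₂ s hs).pow 2)).congr_deriv (by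
        rw [hx₃_zero s hs]
        ring)) ht
  have hsum : Tendsto (fun t => x₁ t ^ 2 + x₂ t ^ 2) atTop (𝓝 0) := by
    have hexp := (tendsto_exp_mul_atTop_nhds_zero
      (mul_neg_of_neg_of_pos (by norm_num) (pow_pos hh 2) : -2 * h ^ 2 < 0)).const_mul
      (x₁ 0 ^ 2 + x₂ 0 ^ 2)
    rw [mul_zero] at hexp
    exact hexp.congr' (eventually_atTop.2 ⟨0, fun t ht => (hdecay t ht).symm⟩)
  refine ⟨hdecay, hsum.of_sq_add_sq_tendsto_zero, ?_, ?_⟩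
  · exact Tendsto.of_sq_add_sq_tendsto_zero (g := x₁) (by simpa only [add_comm] using hsum)
  · exact tendsto_const_nhds.congr' (eventually_atTop.2 ⟨0, fun t ht => (hx₃_zero t ht).symm⟩)

/-- For a solution of the candidate chaotic system on `[0,∞)`
with `x₃(0) = 0`, one has `x₁(t)² + x₂(t)² = (x₁(0)² + x₂(0)²)·exp(−2h²t)` for
all `t ≥ 0`; in particular `x(t) → (0,0,0)` as `t → ∞`. -/
theorem stmt_11 (a b c h r ω : ℝ)
    (ha : 0 < a) (hb : 0 < b) (hc : 0 < c) (hh : 0 < h) (hr : 0 < r) (hω : 0 < ω)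
    (x₁ x₂ x₃ : ℝ → ℝ)
    (hx₁ : ∀ t : ℝ, 0 ≤ t → HasDerivAt x₁ ((x₃ t ^ 2 - h ^ 2) * x₁ t - ω * x₂ t) t)
    (hx₂ : ∀ t : ℝ, 0 ≤ t → HasDerivAt x₂ (ω * x₁ t + (x₃ t ^ 2 - h ^ 2) * x₂ t) t)
    (hx₃ : ∀ t : ℝ, 0 ≤ t → HasDerivAt x₃
      ((r ^ 2 - a * x₁ t ^ 2 - b * x₂ t ^ 2 - c * x₃ t ^ 2) * x₃ t) t)
    (h0 : x₃ 0 = 0) :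
    (∀ t : ℝ, 0 ≤ t →
      x₁ t ^ 2 + x₂ t ^ 2 = (x₁ 0 ^ 2 + x₂ 0 ^ 2) * Real.exp (-2 * h ^ 2 * t)) ∧
    Filter.Tendsto x₁ Filter.atTop (nhds 0) ∧
    Filter.Tendsto x₂ Filter.atTop (nhds 0) ∧
    Filter.Tendsto x₃ Filter.atTop (nhds 0) :=
  stmt_11_general a b c h r ω hh x₁ x₂ x₃ hx₁ hx₂ hx₃ h0
end

section
/- For parameters a, b, c, h, r, ω > 0, the point Z = (0, 0, r/√c) is an equilibrium of the system (f(Z) = 0), the Fréchet derivative of f at Z is the linear map given by the matrix with rows ((r²/c − h², −ω, 0), (ω, r²/c − h², 0), (0, 0, −2r²)), and this matrix, viewed as a complex 3×3 matrix, has exactly the eigenvalues r²/c − h² + iω, r²/c − h² − iω, and −2r². -/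
/-!
At `Z = (0, 0, z)` with `c z² = r²` the mixed entries of the Jacobian vanish, so it splits into
the rotation–scaling block `[[α, -ω], [ω, α]]` with `α = z² - h² = r²/c - h²`, whose eigenvalues
are `α ± iω`, and the entry `r² - 3c z² = -2r²`.
-/

open Matrix

def chaoticField (a b c h r ω : ℝ) (x : Fin 3 → ℝ) : Fin 3 → ℝ :=
  ![(x 2 ^ 2 - h ^ 2) * x 0 - ω * x 1,
    ω * x 0 + (x 2 ^ 2 - h ^ 2) * x 1,
    (r ^ 2 - a * x 0 ^ 2 - b * x 1 ^ 2 - c * x 2 ^ 2) * x 2]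

def chaoticFieldJacobian (a b c h r ω : ℝ) (x : Fin 3 → ℝ) : Matrix (Fin 3) (Fin 3) ℝ :=
  !![x 2 ^ 2 - h ^ 2, -ω, 2 * x 0 * x 2;
     ω, x 2 ^ 2 - h ^ 2, 2 * x 1 * x 2;
     -2 * a * x 0 * x 2, -2 * b * x 1 * x 2, r ^ 2 - a * x 0 ^ 2 - b * x 1 ^ 2 - 3 * c * x 2 ^ 2]

section ChaoticField

variable (a b c h r ω : ℝ)

theorem hasFDerivAt_chaoticField (x : Fin 3 → ℝ) :
    HasFDerivAt (chaoticField a b c h r ω)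
      (toLin' (chaoticFieldJacobian a b c h r ω x)).toContinuousLinearMap x := by
  have hx (i : Fin 3) :
      HasFDerivAt (fun y : Fin 3 → ℝ => y i) (ContinuousLinearMap.proj (R := ℝ) i) x :=
    hasFDerivAt_apply i x
  have hsq (i : Fin 3) := (hx i).pow 2
  refine hasFDerivAt_pi'' fun i => ?_
  fin_cases i <;>
    [refine (((hsq 2).sub_const (h ^ 2)).mul (hx 0)).sub ((hx 1).const_mul ω) |>.congr_fderiv ?_;
     refine ((hx 0).const_mul ω).add (((hsq 2).sub_const (h ^ 2)).mul (hx 1)) |>.congr_fderiv ?_;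
     refine ((((hsq 0).const_mul a).const_sub (r ^ 2)).sub ((hsq 1).const_mul b) |>.sub
      ((hsq 2).const_mul c)).mul (hx 2) |>.congr_fderiv ?_]
  all_goals
    ext v
    simp only [chaoticFieldJacobian, ContinuousLinearMap.comp_apply,
      LinearMap.coe_toContinuousLinearMap', toLin'_apply, cons_mulVec, empty_mulVec, dotProduct,
      Fin.sum_univ_three, cons_val_zero, cons_val_one, cons_val, Fin.zero_eta, Fin.mk_one,
      Fin.reduceFinMk, _root_.add_apply, _root_.sub_apply, _root_.neg_apply, _root_.smul_apply,
      ContinuousLinearMap.proj_apply, smul_eq_mul, Pi.sub_apply, nsmul_eq_mul]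
    ring

variable {a b c h r ω}

theorem chaoticField_eq_zero_of_mul_sq {z : ℝ} (hz : c * z ^ 2 = r ^ 2) :
    chaoticField a b c h r ω ![0, 0, z] = 0 := by
  ext i
  fin_cases i <;> simp [chaoticField, hz]

theorem chaoticFieldJacobian_of_mul_sq {z : ℝ} (hc : c ≠ 0) (hz : c * z ^ 2 = r ^ 2) :
    chaoticFieldJacobian a b c h r ω ![0, 0, z] =
      !![r ^ 2 / c - h ^ 2, -ω, 0; ω, r ^ 2 / c - h ^ 2, 0; 0, 0, -2 * r ^ 2] := by
  have hdiag : z ^ 2 - h ^ 2 = r ^ 2 / c - h ^ 2 := by rw [← hz, mul_div_cancel_left₀ _ hc]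
  have hvert : r ^ 2 - 3 * c * z ^ 2 = -2 * r ^ 2 := by linear_combination (-3) * hz
  ext i j
  fin_cases i <;> fin_cases j <;> simp [chaoticFieldJacobian, hdiag, hvert]

end ChaoticField

theorem spectrum_map_ofReal_rotationBlock (α ω β : ℝ) :
    spectrum ℂ ((!![α, -ω, 0; ω, α, 0; 0, 0, β] : Matrix (Fin 3) (Fin 3) ℝ).map Complex.ofReal) =
      {(α : ℂ) + ω * Complex.I, (α : ℂ) - ω * Complex.I, (β : ℂ)} := by
  ext μ
  have hcharpoly : ((!![α, -ω, 0; ω, α, 0; 0, 0, β] : Matrix (Fin 3) (Fin 3) ℝ).map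
      Complex.ofReal).charpoly.eval μ =
      (μ - (α + ω * Complex.I)) * ((μ - (α - ω * Complex.I)) * (μ - β)) := by
    rw [eval_charpoly, det_fin_three]
    simp only [scalar_apply, Matrix.sub_apply, diagonal_apply_eq, diagonal_apply_ne, map_apply,
      of_apply, cons_val', cons_val_zero, cons_val_fin_one, cons_val_one, cons_val, ne_eq,
      Fin.reduceEq, not_false_eq_true, Complex.ofReal_zero, Complex.ofReal_neg]
    linear_combination ((ω : ℂ) ^ 2 * (μ - β)) * Complex.I_sq
  simp only [mem_spectrum_iff_isRoot_charpoly, Polynomial.IsRoot.def, hcharpoly, mul_eq_zero,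
    sub_eq_zero, Set.mem_insert_iff, Set.mem_singleton_iff]

theorem stmt_13_general (a b c h r ω : ℝ)
    (hc : 0 < c)
    (f : (Fin 3 → ℝ) → (Fin 3 → ℝ))
    (hf : ∀ x : Fin 3 → ℝ, f x =
      ![(x 2 ^ 2 - h ^ 2) * x 0 - ω * x 1,
        ω * x 0 + (x 2 ^ 2 - h ^ 2) * x 1,
        (r ^ 2 - a * x 0 ^ 2 - b * x 1 ^ 2 - c * x 2 ^ 2) * x 2]) :
    f ![0, 0, r / Real.sqrt c] = 0 ∧
    HasFDerivAt f
      (LinearMap.toContinuousLinearMap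
        (Matrix.toLin'
          (!![r ^ 2 / c - h ^ 2, -ω, 0; ω, r ^ 2 / c - h ^ 2, 0; 0, 0, -2 * r ^ 2] :
            Matrix (Fin 3) (Fin 3) ℝ))) ![0, 0, r / Real.sqrt c] ∧
    spectrum ℂ
        ((!![r ^ 2 / c - h ^ 2, -ω, 0; ω, r ^ 2 / c - h ^ 2, 0; 0, 0, -2 * r ^ 2] :
          Matrix (Fin 3) (Fin 3) ℝ).map Complex.ofReal) =
      {(r : ℂ) ^ 2 / c - (h : ℂ) ^ 2 + ω * Complex.I,
       (r : ℂ) ^ 2 / c - (h : ℂ) ^ 2 - ω * Complex.I,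
       -2 * (r : ℂ) ^ 2} := by
  obtain rfl : f = chaoticField a b c h r ω := funext hf
  have hz : c * (r / Real.sqrt c) ^ 2 = r ^ 2 := by
    rw [div_pow, Real.sq_sqrt hc.le, mul_div_cancel₀ _ hc.ne']
  refine ⟨chaoticField_eq_zero_of_mul_sq hz, ?_, ?_⟩
  · rw [← chaoticFieldJacobian_of_mul_sq hc.ne' hz]
    exact hasFDerivAt_chaoticField a b c h r ω _
  · have hspec := spectrum_map_ofReal_rotationBlock (r ^ 2 / c - h ^ 2) ω (-2 * r ^ 2)
    push_cast at hspec
    exact hspec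

/-- The point `Z = (0,0,r/√c)` is an equilibrium of the
candidate chaotic system, the Fréchet derivative of `f` at `Z` is given by the
matrix `[[r²/c−h²,−ω,0],[ω,r²/c−h²,0],[0,0,−2r²]]`, and its complex spectrum
is exactly `{r²/c−h²+iω, r²/c−h²−iω, −2r²}`. -/
theorem stmt_13 (a b c h r ω : ℝ)
    (ha : 0 < a) (hb : 0 < b) (hc : 0 < c) (hh : 0 < h) (hr : 0 < r) (hω : 0 < ω)
    (f : (Fin 3 → ℝ) → (Fin 3 → ℝ))
    (hf : ∀ x : Fin 3 → ℝ, f x =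
      ![(x 2 ^ 2 - h ^ 2) * x 0 - ω * x 1,
        ω * x 0 + (x 2 ^ 2 - h ^ 2) * x 1,
        (r ^ 2 - a * x 0 ^ 2 - b * x 1 ^ 2 - c * x 2 ^ 2) * x 2]) :
    f ![0, 0, r / Real.sqrt c] = 0 ∧
    HasFDerivAt f
      (LinearMap.toContinuousLinearMap
        (Matrix.toLin'
          (!![r ^ 2 / c - h ^ 2, -ω, 0; ω, r ^ 2 / c - h ^ 2, 0; 0, 0, -2 * r ^ 2] :
            Matrix (Fin 3) (Fin 3) ℝ))) ![0, 0, r / Real.sqrt c] ∧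
    spectrum ℂ
        ((!![r ^ 2 / c - h ^ 2, -ω, 0; ω, r ^ 2 / c - h ^ 2, 0; 0, 0, -2 * r ^ 2] :
          Matrix (Fin 3) (Fin 3) ℝ).map Complex.ofReal) =
      {(r : ℂ) ^ 2 / c - (h : ℂ) ^ 2 + ω * Complex.I,
       (r : ℂ) ^ 2 / c - (h : ℂ) ^ 2 - ω * Complex.I,
       -2 * (r : ℂ) ^ 2} :=
  stmt_13_general a b c h r ω hc f hf
end

section
/- For parameters a, b, c, h, r, ω > 0, set T = 2π/ω and let x : [0, T] → ℝ³ be a solution of the system x'(t) = f(x(t)) with x₂(0) = 0, x₁(0) > 0, and x₃(0) > 0. Then x₂(T) = 0, x₁(T) > 0, and x₃(T) > 0. (This expresses that the Poincaré time-T return map P maps the half-plane Σ = {(x₁, 0, x₃) : x₁ > 0, x₃ > 0} into itself.) -/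
/-!
In the rotating frame `u = x₁ cos ωt + x₂ sin ωt`, `w = x₂ cos ωt - x₁ sin ωt` the planar part of
the system decouples into the scalar linear equations `u' = (x₃² - h²) u` and `w' = (x₃² - h²) w`,
and `x₃' = (r² - a x₁² - b x₂² - c x₃²) x₃` is linear in `x₃` as well. By uniqueness of solutions,
a solution of a scalar linear equation `y' = g(t) y` vanishing at one time vanishes identically, so
it keeps its sign. Since `ωT = 2π`, the rotating frame agrees with the original one at `t = 0` and
`t = T`, whence `x₂(T) = w(T) = 0`, `x₁(T) = u(T) > 0` and `x₃(T) > 0`.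
-/

open Set Real

section LinearODE

variable {g y : ℝ → ℝ} {a b : ℝ}

theorem exists_lipschitzWith_mul_of_continuousOn (hg : ContinuousOn g (Icc a b)) :
    ∃ K, ∀ t ∈ Icc a b, LipschitzWith K (fun z : ℝ => g t * z) := by
  obtain ⟨C, hC⟩ := isCompact_Icc.exists_bound_of_continuousOn hg
  refine ⟨C.toNNReal, fun t ht => (lipschitzWith_smul (g t)).weaken ?_⟩
  rw [← NNReal.coe_le_coe, coe_nnnorm]
  exact (hC t ht).trans (le_coe_toNNReal C)

theorem eqOn_zero_of_hasDerivWithinAt_mul (hg : ContinuousOn g (Icc a b))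
    (hy : ∀ t ∈ Icc a b, HasDerivWithinAt y (g t * y t) (Icc a b) t)
    {t₀ : ℝ} (ht₀ : t₀ ∈ Icc a b) (hy₀ : y t₀ = 0) : EqOn y 0 (Icc a b) := by
  obtain ⟨K, hK⟩ := exists_lipschitzWith_mul_of_continuousOn hg
  have hyc : ContinuousOn y (Icc a b) := fun t ht => (hy t ht).continuousWithinAt
  have hlip : ∀ t ∈ Icc a b, LipschitzOnWith K (fun z : ℝ => g t * z) univ :=
    fun t ht => (hK t ht).lipschitzOnWith
  have hzero (s : Set ℝ) (t : ℝ) :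
      HasDerivWithinAt (0 : ℝ → ℝ) (g t * (0 : ℝ → ℝ) t) s t :=
    (hasDerivWithinAt_const t s (0 : ℝ)).congr_deriv (mul_zero _).symm
  rw [← Icc_union_Icc_eq_Icc ht₀.1 ht₀.2]
  refine EqOn.union ?_ ?_
  · have hsub : Icc a t₀ ⊆ Icc a b := Icc_subset_Icc_right ht₀.2
    refine ODE_solution_unique_of_mem_Icc_left (v := fun t z => g t * z)
      (fun t ht => hlip t (hsub (Ioc_subset_Icc_self ht))) (hyc.mono hsub)
      (fun t ht => ((hy t (hsub (Ioc_subset_Icc_self ht))).mono hsub).mono_of_mem_nhdsWithin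
        (Icc_mem_nhdsLE_of_mem ht))
      (fun _ _ => mem_univ _) continuousOn_const (fun t _ => hzero _ t) (fun _ _ => mem_univ _) hy₀
  · have hsub : Icc t₀ b ⊆ Icc a b := Icc_subset_Icc_left ht₀.1
    refine ODE_solution_unique_of_mem_Icc_right (v := fun t z => g t * z)
      (fun t ht => hlip t (hsub (Ico_subset_Icc_self ht))) (hyc.mono hsub)
      (fun t ht => ((hy t (hsub (Ico_subset_Icc_self ht))).mono hsub).mono_of_mem_nhdsWithin
        (Icc_mem_nhdsGE_of_mem ht))
      (fun _ _ => mem_univ _) continuousOn_const (fun t _ => hzero _ t) (fun _ _ => mem_univ _) hy₀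

theorem pos_of_hasDerivWithinAt_mul (hab : a ≤ b) (hg : ContinuousOn g (Icc a b))
    (hy : ∀ t ∈ Icc a b, HasDerivWithinAt y (g t * y t) (Icc a b) t) (hya : 0 < y a) :
    0 < y b := by
  by_contra! hyb
  obtain ⟨t₀, ht₀, hyt₀⟩ := intermediate_value_Icc' hab
    (fun t ht => (hy t ht).continuousWithinAt) ⟨hyb, hya.le⟩
  exact hya.ne' (eqOn_zero_of_hasDerivWithinAt_mul hg hy ht₀ hyt₀ (left_mem_Icc.2 hab))

end LinearODE

theorem hasDerivWithinAt_rotatingFrame {x₁ x₂ : ℝ → ℝ} {d ω t : ℝ} {s : Set ℝ}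
    (h₁ : HasDerivWithinAt x₁ (d * x₁ t - ω * x₂ t) s t)
    (h₂ : HasDerivWithinAt x₂ (ω * x₁ t + d * x₂ t) s t) :
    HasDerivWithinAt (fun τ => x₁ τ * cos (ω * τ) + x₂ τ * sin (ω * τ))
        (d * (x₁ t * cos (ω * t) + x₂ t * sin (ω * t))) s t ∧
      HasDerivWithinAt (fun τ => x₂ τ * cos (ω * τ) - x₁ τ * sin (ω * τ))
        (d * (x₂ t * cos (ω * t) - x₁ t * sin (ω * t))) s t := by
  have hcos := (((hasDerivAt_id t).const_mul ω).cos).hasDerivWithinAt (s := s)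
  have hsin := (((hasDerivAt_id t).const_mul ω).sin).hasDerivWithinAt (s := s)
  constructor
  · exact ((h₁.mul hcos).add (h₂.mul hsin)).congr_deriv (by simp only [id]; ring)
  · exact ((h₂.mul hcos).sub (h₁.mul hsin)).congr_deriv (by simp only [id]; ring)

theorem stmt_15_general (a b c h r ω : ℝ)
    (hω : 0 < ω)
    (T : ℝ) (hT : T = 2 * Real.pi / ω)
    (x₁ x₂ x₃ : ℝ → ℝ)
    (hx₁ : ∀ t ∈ Set.Icc (0:ℝ) T, HasDerivWithinAt x₁
      ((x₃ t ^ 2 - h ^ 2) * x₁ t - ω * x₂ t) (Set.Icc 0 T) t)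
    (hx₂ : ∀ t ∈ Set.Icc (0:ℝ) T, HasDerivWithinAt x₂
      (ω * x₁ t + (x₃ t ^ 2 - h ^ 2) * x₂ t) (Set.Icc 0 T) t)
    (hx₃ : ∀ t ∈ Set.Icc (0:ℝ) T, HasDerivWithinAt x₃
      ((r ^ 2 - a * x₁ t ^ 2 - b * x₂ t ^ 2 - c * x₃ t ^ 2) * x₃ t)
      (Set.Icc 0 T) t)
    (h02 : x₂ 0 = 0) (h01 : 0 < x₁ 0) (h03 : 0 < x₃ 0) :
    x₂ T = 0 ∧ 0 < x₁ T ∧ 0 < x₃ T := by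
  have hT₀ : 0 ≤ T := hT ▸ by positivity
  have hωT : ω * T = 2 * π := by rw [hT]; field_simp
  have hx₁c : ContinuousOn x₁ (Icc 0 T) := fun t ht => (hx₁ t ht).continuousWithinAt
  have hx₂c : ContinuousOn x₂ (Icc 0 T) := fun t ht => (hx₂ t ht).continuousWithinAt
  have hx₃c : ContinuousOn x₃ (Icc 0 T) := fun t ht => (hx₃ t ht).continuousWithinAt
  have hrot := fun t ht => hasDerivWithinAt_rotatingFrame (hx₁ t ht) (hx₂ t ht)
  have hw := eqOn_zero_of_hasDerivWithinAt_mul (by fun_prop) (fun t ht => (hrot t ht).2)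
    (left_mem_Icc.2 hT₀) (by simp [h02]) (right_mem_Icc.2 hT₀)
  have hu := pos_of_hasDerivWithinAt_mul hT₀ (by fun_prop) (fun t ht => (hrot t ht).1)
    (by simpa using h01)
  simp only [hωT, cos_two_pi, sin_two_pi, Pi.zero_apply] at hw hu
  refine ⟨by simpa using hw, by simpa using hu, ?_⟩
  exact pos_of_hasDerivWithinAt_mul hT₀ (by fun_prop) hx₃ h03

/-- With `T = 2π/ω`, a solution of the candidate chaotic system
on `[0,T]` starting on the half-plane `Σ = {(x₁,0,x₃) : x₁ > 0, x₃ > 0}`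
returns to `Σ` at time `T`: the Poincaré return map maps `Σ` into itself. -/
theorem stmt_15 (a b c h r ω : ℝ)
    (ha : 0 < a) (hb : 0 < b) (hc : 0 < c) (hh : 0 < h) (hr : 0 < r) (hω : 0 < ω)
    (T : ℝ) (hT : T = 2 * Real.pi / ω)
    (x₁ x₂ x₃ : ℝ → ℝ)
    (hx₁ : ∀ t ∈ Set.Icc (0:ℝ) T, HasDerivWithinAt x₁
      ((x₃ t ^ 2 - h ^ 2) * x₁ t - ω * x₂ t) (Set.Icc 0 T) t)
    (hx₂ : ∀ t ∈ Set.Icc (0:ℝ) T, HasDerivWithinAt x₂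
      (ω * x₁ t + (x₃ t ^ 2 - h ^ 2) * x₂ t) (Set.Icc 0 T) t)
    (hx₃ : ∀ t ∈ Set.Icc (0:ℝ) T, HasDerivWithinAt x₃
      ((r ^ 2 - a * x₁ t ^ 2 - b * x₂ t ^ 2 - c * x₃ t ^ 2) * x₃ t)
      (Set.Icc 0 T) t)
    (h02 : x₂ 0 = 0) (h01 : 0 < x₁ 0) (h03 : 0 < x₃ 0) :
    x₂ T = 0 ∧ 0 < x₁ T ∧ 0 < x₃ T :=
  stmt_15_general a b c h r ω hω T hT x₁ x₂ x₃ hx₁ hx₂ hx₃ h02 h01 h03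
end

section
/- For parameters a, b, c, h, r, ω > 0 and a feedback gain K > 1, consider the closed-loop system obtained from applying the control u = −Kr²x₃: x₁' = (x₃²−h²)x₁ − ωx₂, x₂' = ωx₁ + (x₃²−h²)x₂, x₃' = ((1−K)r² − ax₁² − bx₂² − cx₃²)x₃. Then every solution x : [0, ∞) → ℝ³ of the closed-loop system satisfies x₃(t)² ≤ x₃(0)²·exp(−2(K−1)r²·t) for all t ≥ 0. -/
/-!
Along a solution, `(x₃²)' = 2 ((1 - K) r² - a x₁² - b x₂² - c x₃²) x₃² ≤ -2 (K - 1) r² x₃²`, since the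
terms `a x₁² + b x₂² + c x₃²` only speed up the decay. A function `z` with `z' ≤ -κ z` decays at
least like `e^{-κ t}`: the product `z t · e^{κ t}` has nonpositive derivative, hence is antitone
on `[0, ∞)`.
-/

open Real Set

theorem le_mul_exp_neg_of_hasDerivAt_le_neg_mul (κ : ℝ) {z z' : ℝ → ℝ}
    (hz : ∀ t, 0 ≤ t → HasDerivAt z (z' t) t) (hle : ∀ t, 0 ≤ t → z' t ≤ -κ * z t)
    {t : ℝ} (ht : 0 ≤ t) : z t ≤ z 0 * exp (-κ * t) := by
  have hderiv : ∀ s, 0 ≤ s → HasDerivAt (fun s => z s * exp (κ * s))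
      ((z' s + κ * z s) * exp (κ * s)) s := fun s hs =>
    ((hz s hs).fun_mul ((hasDerivAt_id' s).const_mul κ).exp).congr_deriv (by ring)
  have hanti : AntitoneOn (fun s => z s * exp (κ * s)) (Ici 0) := by
    refine antitoneOn_of_hasDerivWithinAt_nonpos (convex_Ici 0)
      (fun s hs => (hderiv s hs).continuousAt.continuousWithinAt)
      (fun s hs => (hderiv s (interior_subset hs)).hasDerivWithinAt) (fun s hs => ?_)
    have := hle s (interior_subset hs)
    exact mul_nonpos_of_nonpos_of_nonneg (by linarith) (exp_nonneg _)
  have hdecay : z t * exp (κ * t) ≤ z 0 := by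
    simpa using hanti self_mem_Ici ht ht
  calc z t = z t * exp (κ * t) * exp (-κ * t) := by
        rw [mul_assoc, ← exp_add]; simp
    _ ≤ z 0 * exp (-κ * t) := mul_le_mul_of_nonneg_right hdecay (exp_nonneg _)

theorem sq_le_sq_mul_exp_neg_of_hasDerivAt_mul (μ : ℝ) {y q : ℝ → ℝ}
    (hy : ∀ t, 0 ≤ t → HasDerivAt y (q t * y t) t) (hq : ∀ t, 0 ≤ t → q t ≤ -μ)
    {t : ℝ} (ht : 0 ≤ t) : y t ^ 2 ≤ y 0 ^ 2 * exp (-(2 * μ) * t) := by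
  refine le_mul_exp_neg_of_hasDerivAt_le_neg_mul (2 * μ) (z := fun s => y s ^ 2)
    (z' := fun s => 2 * q s * y s ^ 2) (fun s hs => ?_) (fun s hs => ?_) ht
  · exact ((hy s hs).fun_pow 2).congr_deriv (by ring)
  · have := mul_le_mul_of_nonneg_right (hq s hs) (sq_nonneg (y s))
    linarith

theorem stmt_16_general (a b c r K : ℝ)
    (ha : 0 < a) (hb : 0 < b) (hc : 0 < c)
    (x₁ x₂ x₃ : ℝ → ℝ)
    (hx₃ : ∀ t : ℝ, 0 ≤ t → HasDerivAt x₃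
      (((1 - K) * r ^ 2 - a * x₁ t ^ 2 - b * x₂ t ^ 2 - c * x₃ t ^ 2) * x₃ t) t) :
    ∀ t : ℝ, 0 ≤ t →
      x₃ t ^ 2 ≤ x₃ 0 ^ 2 * Real.exp (-2 * (K - 1) * r ^ 2 * t) := by
  intro t ht
  have hrate : ∀ s,
      (1 - K) * r ^ 2 - a * x₁ s ^ 2 - b * x₂ s ^ 2 - c * x₃ s ^ 2 ≤ -((K - 1) * r ^ 2) := by
    intro s
    have := mul_nonneg ha.le (sq_nonneg (x₁ s))
    have := mul_nonneg hb.le (sq_nonneg (x₂ s))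
    have := mul_nonneg hc.le (sq_nonneg (x₃ s))
    linarith
  convert sq_le_sq_mul_exp_neg_of_hasDerivAt_mul _ hx₃ (fun s _ => hrate s) ht using 3
  ring

/-- For the closed-loop system obtained with the feedback
`u = −Kr²x₃` (`K > 1`), every solution on `[0,∞)` satisfies
`x₃(t)² ≤ x₃(0)²·exp(−2(K−1)r²t)` for all `t ≥ 0`. -/
theorem stmt_16 (a b c h r ω K : ℝ)
    (ha : 0 < a) (hb : 0 < b) (hc : 0 < c) (hh : 0 < h) (hr : 0 < r) (hω : 0 < ω)
    (hK : 1 < K)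
    (x₁ x₂ x₃ : ℝ → ℝ)
    (hx₁ : ∀ t : ℝ, 0 ≤ t → HasDerivAt x₁ ((x₃ t ^ 2 - h ^ 2) * x₁ t - ω * x₂ t) t)
    (hx₂ : ∀ t : ℝ, 0 ≤ t → HasDerivAt x₂ (ω * x₁ t + (x₃ t ^ 2 - h ^ 2) * x₂ t) t)
    (hx₃ : ∀ t : ℝ, 0 ≤ t → HasDerivAt x₃
      (((1 - K) * r ^ 2 - a * x₁ t ^ 2 - b * x₂ t ^ 2 - c * x₃ t ^ 2) * x₃ t) t) :
    ∀ t : ℝ, 0 ≤ t →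
      x₃ t ^ 2 ≤ x₃ 0 ^ 2 * Real.exp (-2 * (K - 1) * r ^ 2 * t) :=
  stmt_16_general a b c r K ha hb hc x₁ x₂ x₃ hx₃
end

section
/- For parameters a, b, c, h, r, ω > 0 and a feedback gain K > 1, consider the closed-loop system obtained from applying the control u = −Kr²x₃: x₁' = (x₃²−h²)x₁ − ωx₂, x₂' = ωx₁ + (x₃²−h²)x₂, x₃' = ((1−K)r² − ax₁² − bx₂² − cx₃²)x₃. Then every solution x : [0, ∞) → ℝ³ of the closed-loop system converges to the origin: x(t) → (0,0,0) as t → ∞. -/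
/-!
The feedback makes the coefficient of `x₃` in its own equation at most `-(K - 1) r² < 0`, so
`x₃²` decays exponentially. Once `x₃² < h² / 2`, the `(x₁, x₂)`-equations are a rotation with
damping at least `h² / 2`, and the rotation does not change `x₁² + x₂²`, which therefore decays
exponentially as well. Both decay estimates come from `f' ≤ -μ f`, i.e. `f(t) e^{μt}` is
nonincreasing.
-/

open Filter Real Set Topology

lemma tendsto_zero_of_hasDerivAt_le_neg_mul {f f' : ℝ → ℝ} {μ : ℝ} (hμ : 0 < μ)
    (hf : ∀ᶠ t in atTop, HasDerivAt f (f' t) t) (hf' : ∀ᶠ t in atTop, f' t ≤ -μ * f t)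
    (hf₀ : ∀ᶠ t in atTop, 0 ≤ f t) : Tendsto f atTop (𝓝 0) := by
  obtain ⟨T, hT⟩ := eventually_atTop.1 (hf.and hf')
  set g : ℝ → ℝ := fun t ↦ f t * exp (μ * t)
  have hg : ∀ t, T ≤ t → HasDerivAt g ((f' t + μ * f t) * exp (μ * t)) t := fun t ht ↦
    ((hT t ht).1.fun_mul ((hasDerivAt_id t).const_mul μ).exp).congr_deriv
      (by simp only [id, mul_one]; ring)
  have hanti : AntitoneOn g (Ici T) := by
    refine antitoneOn_of_hasDerivWithinAt_nonpos (convex_Ici T)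
      (fun t ht ↦ (hg t ht).continuousAt.continuousWithinAt)
      (fun t ht ↦ (hg t (interior_subset ht)).hasDerivWithinAt) fun t ht ↦ ?_
    have := (hT t (interior_subset ht)).2
    exact mul_nonpos_of_nonpos_of_nonneg (by linarith) (exp_pos _).le
  have hbound : ∀ᶠ t in atTop, f t ≤ g T * exp (-(μ * t)) := by
    filter_upwards [eventually_ge_atTop T] with t ht
    calc f t = g t * exp (-(μ * t)) := by simp only [g, mul_assoc, ← exp_add, add_neg_cancel,
          exp_zero, mul_one]
      _ ≤ g T * exp (-(μ * t)) := by gcongr; exact hanti self_mem_Ici ht ht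
  have hlim : Tendsto (fun t ↦ g T * exp (-(μ * t))) atTop (𝓝 0) := by
    simpa using (tendsto_exp_neg_atTop_nhds_zero.comp (tendsto_id.const_mul_atTop hμ)).const_mul
      (g T)
  exact squeeze_zero' hf₀ hbound hlim

lemma tendsto_zero_of_sq_tendsto_zero {α : Type*} {l : Filter α} {f : α → ℝ}
    (hf : Tendsto (fun t ↦ f t ^ 2) l (𝓝 0)) : Tendsto f l (𝓝 0) := by
  rw [tendsto_zero_iff_abs_tendsto_zero]
  simpa [Function.comp_def, sqrt_sq_eq_abs] using hf.sqrt

lemma tendsto_zero_of_hasDerivAt_eq_mul {x g : ℝ → ℝ} {μ : ℝ} (hμ : 0 < μ)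
    (hx : ∀ᶠ t in atTop, HasDerivAt x (g t * x t) t) (hg : ∀ᶠ t in atTop, g t ≤ -μ) :
    Tendsto x atTop (𝓝 0) := by
  refine tendsto_zero_of_sq_tendsto_zero <| tendsto_zero_of_hasDerivAt_le_neg_mul
    (f' := fun t ↦ 2 * g t * x t ^ 2) (μ := 2 * μ) (by positivity)
    (hx.mono fun t ht ↦ (ht.pow 2).congr_deriv (by ring))
    (hg.mono fun t ht ↦ by nlinarith [sq_nonneg (x t)]) (.of_forall fun t ↦ sq_nonneg _)

/-- For `z = x₁ + i x₂` the system reads `z' = (g + iω) z`, so `|z|²' = 2 g |z|²`. -/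
lemma tendsto_zero_of_hasDerivAt_damped_rotation {x₁ x₂ g : ℝ → ℝ} {ω μ : ℝ} (hμ : 0 < μ)
    (hx₁ : ∀ᶠ t in atTop, HasDerivAt x₁ (g t * x₁ t - ω * x₂ t) t)
    (hx₂ : ∀ᶠ t in atTop, HasDerivAt x₂ (ω * x₁ t + g t * x₂ t) t)
    (hg : ∀ᶠ t in atTop, g t ≤ -μ) :
    Tendsto x₁ atTop (𝓝 0) ∧ Tendsto x₂ atTop (𝓝 0) := by
  have hV : Tendsto (fun t ↦ x₁ t ^ 2 + x₂ t ^ 2) atTop (𝓝 0) :=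
    tendsto_zero_of_hasDerivAt_le_neg_mul
      (f' := fun t ↦ 2 * g t * (x₁ t ^ 2 + x₂ t ^ 2)) (μ := 2 * μ) (by positivity)
      ((hx₁.and hx₂).mono fun t ht ↦ ((ht.1.pow 2).add (ht.2.pow 2)).congr_deriv (by ring))
      (hg.mono fun t ht ↦ by nlinarith [sq_nonneg (x₁ t), sq_nonneg (x₂ t)])
      (.of_forall fun t ↦ by positivity)
  exact ⟨tendsto_zero_of_sq_tendsto_zero <| squeeze_zero (fun t ↦ sq_nonneg _)
      (fun t ↦ le_add_of_nonneg_right (sq_nonneg _)) hV,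
    tendsto_zero_of_sq_tendsto_zero <| squeeze_zero (fun t ↦ sq_nonneg _)
      (fun t ↦ le_add_of_nonneg_left (sq_nonneg _)) hV⟩

theorem stmt_17_general (a b c h r ω K : ℝ)
    (ha : 0 < a) (hb : 0 < b) (hc : 0 < c) (hh : 0 < h) (hr : 0 < r)
    (hK : 1 < K)
    (x₁ x₂ x₃ : ℝ → ℝ)
    (hx₁ : ∀ t : ℝ, 0 ≤ t → HasDerivAt x₁ ((x₃ t ^ 2 - h ^ 2) * x₁ t - ω * x₂ t) t)
    (hx₂ : ∀ t : ℝ, 0 ≤ t → HasDerivAt x₂ (ω * x₁ t + (x₃ t ^ 2 - h ^ 2) * x₂ t) t)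
    (hx₃ : ∀ t : ℝ, 0 ≤ t → HasDerivAt x₃
      (((1 - K) * r ^ 2 - a * x₁ t ^ 2 - b * x₂ t ^ 2 - c * x₃ t ^ 2) * x₃ t) t) :
    Filter.Tendsto x₁ Filter.atTop (nhds 0) ∧
    Filter.Tendsto x₂ Filter.atTop (nhds 0) ∧
    Filter.Tendsto x₃ Filter.atTop (nhds 0) := by
  have hx₃_lim : Tendsto x₃ atTop (𝓝 0) := by
    refine tendsto_zero_of_hasDerivAt_eq_mul (μ := (K - 1) * r ^ 2)
      (by have := sub_pos.2 hK; positivity) ((eventually_ge_atTop 0).mono hx₃)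
      (.of_forall fun t ↦ ?_)
    nlinarith [mul_nonneg ha.le (sq_nonneg (x₁ t)), mul_nonneg hb.le (sq_nonneg (x₂ t)),
      mul_nonneg hc.le (sq_nonneg (x₃ t))]
  have hdamping : ∀ᶠ t in atTop, x₃ t ^ 2 - h ^ 2 ≤ -(h ^ 2 / 2) :=
    ((hx₃_lim.pow 2).eventually_lt_const (u := h ^ 2 / 2) (by norm_num; positivity)).mono
      fun t ht ↦ by linarith
  obtain ⟨hx₁_lim, hx₂_lim⟩ := tendsto_zero_of_hasDerivAt_damped_rotation
    (g := fun t ↦ x₃ t ^ 2 - h ^ 2) (by positivity : 0 < h ^ 2 / 2)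
    ((eventually_ge_atTop 0).mono hx₁) ((eventually_ge_atTop 0).mono hx₂) hdamping
  exact ⟨hx₁_lim, hx₂_lim, hx₃_lim⟩

/-- For the closed-loop system obtained with the feedback
`u = −Kr²x₃` (`K > 1`), every solution on `[0,∞)` converges to the origin. -/
theorem stmt_17 (a b c h r ω K : ℝ)
    (ha : 0 < a) (hb : 0 < b) (hc : 0 < c) (hh : 0 < h) (hr : 0 < r) (hω : 0 < ω)
    (hK : 1 < K)
    (x₁ x₂ x₃ : ℝ → ℝ)
    (hx₁ : ∀ t : ℝ, 0 ≤ t → HasDerivAt x₁ ((x₃ t ^ 2 - h ^ 2) * x₁ t - ω * x₂ t) t)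
    (hx₂ : ∀ t : ℝ, 0 ≤ t → HasDerivAt x₂ (ω * x₁ t + (x₃ t ^ 2 - h ^ 2) * x₂ t) t)
    (hx₃ : ∀ t : ℝ, 0 ≤ t → HasDerivAt x₃
      (((1 - K) * r ^ 2 - a * x₁ t ^ 2 - b * x₂ t ^ 2 - c * x₃ t ^ 2) * x₃ t) t) :
    Filter.Tendsto x₁ Filter.atTop (nhds 0) ∧
    Filter.Tendsto x₂ Filter.atTop (nhds 0) ∧
    Filter.Tendsto x₃ Filter.atTop (nhds 0) :=
  stmt_17_general a b c h r ω K ha hb hc hh hr hK x₁ x₂ x₃ hx₁ hx₂ hx₃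
end

section
/- Let a, b, c, r > 0 and let x₁, x₂, x_{s3}, x_{m3} : [0, ∞) → ℝ be differentiable functions satisfying x_{s3}'(t) = (r² − a·x₁(t)² − b·x₂(t)² − c·x_{s3}(t)²)·x_{s3}(t) − r²·(x_{s3}(t) − x_{m3}(t)) and x_{m3}'(t) = (r² − a·x₁(t)² − b·x₂(t)² − c·x_{m3}(t)²)·x_{m3}(t) for all t ≥ 0. Then the error e₃ = x_{s3} − x_{m3} satisfies e₃'(t) = −(a·x₁(t)² + b·x₂(t)² + c·(x_{s3}(t)² + x_{s3}(t)·x_{m3}(t) + x_{m3}(t)²))·e₃(t), where the coefficient a·x₁² + b·x₂² + c·(x_{s3}² + x_{s3}x_{m3} + x_{m3}²) is nonnegative; consequently t ↦ e₃(t)² is nonincreasing on [0, ∞). -/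
/-! Subtracting the master equation from the slave equation, the common linear part `r²` of the
two cubic vector fields cancels against the controller, and the cubic terms combine through
`u³ - v³ = (u² + uv + v²)(u - v)`. The resulting coefficient of `e₃` is a sum of nonnegative
terms, so `(e₃²)' = 2e₃e₃' ≤ 0`. -/

lemma sq_add_mul_add_sq_nonneg {R : Type*} [CommRing R] [LinearOrder R] [IsStrictOrderedRing R]
    (u v : R) : 0 ≤ u ^ 2 + u * v + v ^ 2 := by
  nlinarith [sq_nonneg (u + v), sq_nonneg u, sq_nonneg v]

lemma HasDerivAt.sub_of_cubic {us um : ℝ → ℝ} {p c k t : ℝ}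
    (hs : HasDerivAt us ((p - c * us t ^ 2) * us t - k * (us t - um t)) t)
    (hm : HasDerivAt um ((p - c * um t ^ 2) * um t) t) :
    HasDerivAt (fun s => us s - um s)
      ((p - k - c * (us t ^ 2 + us t * um t + um t ^ 2)) * (us t - um t)) t :=
  (hs.sub hm).congr_deriv (by ring)

lemma antitoneOn_sq_of_hasDerivAt_neg_mul {f μ : ℝ → ℝ} {D : Set ℝ} (hD : Convex ℝ D)
    (hf : ∀ t ∈ D, HasDerivAt f (-μ t * f t) t) (hμ : ∀ t ∈ D, 0 ≤ μ t) :
    AntitoneOn (fun t => f t ^ 2) D := by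
  have hsq : ∀ t ∈ D, HasDerivAt (fun s => f s ^ 2) (-(2 * μ t * f t ^ 2)) t := fun t ht =>
    ((hf t ht).pow 2).congr_deriv (by ring)
  exact antitoneOn_of_hasDerivWithinAt_nonpos hD
    (fun t ht => (hsq t ht).continuousAt.continuousWithinAt)
    (fun t ht => (hsq t (interior_subset ht)).hasDerivWithinAt)
    fun t ht => neg_nonpos.mpr (by have := hμ t (interior_subset ht); positivity)

theorem stmt_19_general (a b c r : ℝ)
    (ha : 0 < a) (hb : 0 < b) (hc : 0 < c)
    (x₁ x₂ xs₃ xm₃ : ℝ → ℝ)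
    (hxs₃ : ∀ t : ℝ, 0 ≤ t → HasDerivAt xs₃
      ((r ^ 2 - a * x₁ t ^ 2 - b * x₂ t ^ 2 - c * xs₃ t ^ 2) * xs₃ t -
        r ^ 2 * (xs₃ t - xm₃ t)) t)
    (hxm₃ : ∀ t : ℝ, 0 ≤ t → HasDerivAt xm₃
      ((r ^ 2 - a * x₁ t ^ 2 - b * x₂ t ^ 2 - c * xm₃ t ^ 2) * xm₃ t) t) :
    (∀ t : ℝ, 0 ≤ t →
      HasDerivAt (fun s => xs₃ s - xm₃ s)
        (-(a * x₁ t ^ 2 + b * x₂ t ^ 2 +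
            c * (xs₃ t ^ 2 + xs₃ t * xm₃ t + xm₃ t ^ 2)) * (xs₃ t - xm₃ t)) t ∧
      0 ≤ a * x₁ t ^ 2 + b * x₂ t ^ 2 +
            c * (xs₃ t ^ 2 + xs₃ t * xm₃ t + xm₃ t ^ 2)) ∧
    AntitoneOn (fun t => (xs₃ t - xm₃ t) ^ 2) (Set.Ici (0:ℝ)) := by
  have herr : ∀ t : ℝ, 0 ≤ t → HasDerivAt (fun s => xs₃ s - xm₃ s)
      (-(a * x₁ t ^ 2 + b * x₂ t ^ 2 +
          c * (xs₃ t ^ 2 + xs₃ t * xm₃ t + xm₃ t ^ 2)) * (xs₃ t - xm₃ t)) t := fun t ht =>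
    ((hxs₃ t ht).sub_of_cubic (hxm₃ t ht)).congr_deriv (by ring)
  have hcoef : ∀ t : ℝ, 0 ≤ a * x₁ t ^ 2 + b * x₂ t ^ 2 +
      c * (xs₃ t ^ 2 + xs₃ t * xm₃ t + xm₃ t ^ 2) := fun t => by
    have := sq_add_mul_add_sq_nonneg (xs₃ t) (xm₃ t)
    positivity
  exact ⟨fun t ht => ⟨herr t ht, hcoef t⟩,
    antitoneOn_sq_of_hasDerivAt_neg_mul (convex_Ici 0) herr fun t _ => hcoef t⟩

/-- With the synchronizing controller `u₃ = −r²e₃`, the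
remaining error `e₃ = x_{s3} − x_{m3}` satisfies the pseudo-linear equation
`e₃' = −(ax₁² + bx₂² + c(x_{s3}² + x_{s3}x_{m3} + x_{m3}²))·e₃` with
nonnegative coefficient; consequently `t ↦ e₃(t)²` is nonincreasing on
`[0,∞)`. -/
theorem stmt_19 (a b c r : ℝ)
    (ha : 0 < a) (hb : 0 < b) (hc : 0 < c) (hr : 0 < r)
    (x₁ x₂ xs₃ xm₃ : ℝ → ℝ)
    (hxs₃ : ∀ t : ℝ, 0 ≤ t → HasDerivAt xs₃
      ((r ^ 2 - a * x₁ t ^ 2 - b * x₂ t ^ 2 - c * xs₃ t ^ 2) * xs₃ t -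
        r ^ 2 * (xs₃ t - xm₃ t)) t)
    (hxm₃ : ∀ t : ℝ, 0 ≤ t → HasDerivAt xm₃
      ((r ^ 2 - a * x₁ t ^ 2 - b * x₂ t ^ 2 - c * xm₃ t ^ 2) * xm₃ t) t) :
    (∀ t : ℝ, 0 ≤ t →
      HasDerivAt (fun s => xs₃ s - xm₃ s)
        (-(a * x₁ t ^ 2 + b * x₂ t ^ 2 +
            c * (xs₃ t ^ 2 + xs₃ t * xm₃ t + xm₃ t ^ 2)) * (xs₃ t - xm₃ t)) t ∧
      0 ≤ a * x₁ t ^ 2 + b * x₂ t ^ 2 +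
            c * (xs₃ t ^ 2 + xs₃ t * xm₃ t + xm₃ t ^ 2)) ∧
    AntitoneOn (fun t => (xs₃ t - xm₃ t) ^ 2) (Set.Ici (0:ℝ)) :=
  stmt_19_general a b c r ha hb hc x₁ x₂ xs₃ xm₃ hxs₃ hxm₃
end
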